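/- arXiv:1506.07321 — 2 statements merged into one kernel-verified Lean document; each statement's English description precedes it below -/
import Mathlib

section
/- For each i = 1, …, n one has f_i ∈ X_i^d + Σ_{e=0}^{d−1} P_{i−1} X_i^e Y_{r,i} and h_i ∈ a_d + Σ_{f=1}^{d} P_{i−1} X_i^f Y_{r,i}, where P_{i−1} := R[X_1^{±1}, …, X_{i−1}^{±1}] ⊆ Ŷ_{r,n} and Y_{r,i} is the R-subalgebra of Ŷ_{r,n} generated by t_1, …, t_i, g_1, …, g_{i−1}. -/
noncomputable section

namespace YH

/-- Generators of the affine Yokonuma–Hecke algebra `Ŷ_{r,n}`: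
`t 1, …, t n`, `g 1, …, g (n-1)`, `X₁` and `X₁⁻¹`. -/
inductive Gen (n : ℕ) : Type
  | t (i : Fin n) : Gen n
  | g (i : Fin (n - 1)) : Gen n
  | X : Gen n
  | Xinv : Gen n

variable (r n d : ℕ) (R : Type) [CommRing R] [Invertible (r : R)] (q : Rˣ) (v : ℕ → Rˣ)

/-- The free `R`-algebra on the generators. -/
abbrev F : Type := FreeAlgebra R (Gen n)

/-- The generator `t_i` (1-based index, junk value 1 out of range). -/
def tF (i : ℕ) : F n R :=
  if h : 1 ≤ i ∧ i ≤ n then FreeAlgebra.ι R (Gen.t ⟨i - 1, by omega⟩) else 1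

/-- The generator `g_i` (1-based index, junk value 1 out of range). -/
def gF (i : ℕ) : F n R :=
  if h : 1 ≤ i ∧ i ≤ n - 1 then FreeAlgebra.ι R (Gen.g ⟨i - 1, by omega⟩) else 1

/-- The generator `X₁`. -/
def XF : F n R := FreeAlgebra.ι R Gen.X

/-- The generator `X₁⁻¹`. -/
def XinvF : F n R := FreeAlgebra.ι R Gen.Xinv

/-- `e_i = (1/r) ∑_{s=0}^{r-1} t_i^s t_{i+1}^{-s}` (using `t^r = 1`,
`t^{-s}` is represented by `t^{r-s}`). -/
def eF (i : ℕ) : F n R :=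
  ⅟(r : R) • ∑ s ∈ Finset.range r, tF n R i ^ s * tF n R (i + 1) ^ (r - s)

/-- The scalar `q - q⁻¹`. -/
def qd : R := (q : R) - ((q⁻¹ : Rˣ) : R)

/-- The defining relations of the affine Yokonuma–Hecke algebra `Ŷ_{r,n}`. -/
inductive Rel : F n R → F n R → Prop
  | gg {i j : ℕ} (h1 : 1 ≤ i) (h2 : i + 2 ≤ j) (h3 : j ≤ n - 1) :
      Rel (gF n R i * gF n R j) (gF n R j * gF n R i)
  | braid {i : ℕ} (h1 : 1 ≤ i) (h2 : i + 1 ≤ n - 1) :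
      Rel (gF n R i * gF n R (i + 1) * gF n R i)
        (gF n R (i + 1) * gF n R i * gF n R (i + 1))
  | tt {i j : ℕ} (h1 : 1 ≤ i) (h2 : i ≤ n) (h3 : 1 ≤ j) (h4 : j ≤ n) :
      Rel (tF n R i * tF n R j) (tF n R j * tF n R i)
  | gt {i j : ℕ} (h1 : 1 ≤ i) (h2 : i ≤ n - 1) (h3 : 1 ≤ j) (h4 : j ≤ n) :
      Rel (gF n R i * tF n R j)
        (tF n R (if j = i then i + 1 else if j = i + 1 then i else j) * gF n R i)
  | tpow {i : ℕ} (h1 : 1 ≤ i) (h2 : i ≤ n) : Rel (tF n R i ^ r) 1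
  | gsq {i : ℕ} (h1 : 1 ≤ i) (h2 : i ≤ n - 1) :
      Rel (gF n R i ^ 2) (1 + qd R q • (eF r n R i * gF n R i))
  | XXinv : Rel (XF n R * XinvF n R) 1
  | XinvX : Rel (XinvF n R * XF n R) 1
  | gXgX : Rel (gF n R 1 * XF n R * gF n R 1 * XF n R)
      (XF n R * gF n R 1 * XF n R * gF n R 1)
  | gX {i : ℕ} (h1 : 2 ≤ i) (h2 : i ≤ n - 1) : Rel (gF n R i * XF n R) (XF n R * gF n R i)
  | tX {j : ℕ} (h1 : 1 ≤ j) (h2 : j ≤ n) : Rel (tF n R j * XF n R) (XF n R * tF n R j)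

/-- The affine Yokonuma–Hecke algebra `Ŷ_{r,n}`, presented by generators and relations. -/
abbrev AYH : Type := RingQuot (Rel r n R q)

/-- The canonical projection from the free algebra onto `Ŷ_{r,n}`. -/
def mkA : F n R →ₐ[R] AYH r n R q := RingQuot.mkAlgHom R (Rel r n R q)

/-- The element `t_i` of `Ŷ_{r,n}`. -/
def tA (i : ℕ) : AYH r n R q := mkA r n R q (tF n R i)

/-- The element `g_i` of `Ŷ_{r,n}`. -/
def gA (i : ℕ) : AYH r n R q := mkA r n R q (gF n R i)

/-- The element `e_i` of `Ŷ_{r,n}`. -/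
def eA (i : ℕ) : AYH r n R q := mkA r n R q (eF r n R i)

/-- The idempotent `e_{i,k} = (1/r) ∑_{s=0}^{r-1} t_i^s t_k^{-s}` of `Ŷ_{r,n}`. -/
def eijA (i k : ℕ) : AYH r n R q :=
  ⅟(r : R) • ∑ s ∈ Finset.range r, tA r n R q i ^ s * tA r n R q k ^ (r - s)

/-- `g_i⁻¹ = g_i - (q - q⁻¹) e_i`. -/
def ginvA (i : ℕ) : AYH r n R q := gA r n R q i - qd R q • eA r n R q i

/-- The elements `X_i`, defined by `X_{i+1} = g_i X_i g_i` (1-based; `X 0` is junk). -/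
def XA : ℕ → AYH r n R q
  | 0 => 1
  | 1 => mkA r n R q (XF n R)
  | i + 2 => gA r n R q (i + 1) * XA (i + 1) * gA r n R q (i + 1)

/-- The elements `X_i⁻¹`, defined by `X_{i+1}⁻¹ = g_i⁻¹ X_i⁻¹ g_i⁻¹`. -/
def XAinv : ℕ → AYH r n R q
  | 0 => 1
  | 1 => mkA r n R q (XinvF n R)
  | i + 2 => ginvA r n R q (i + 1) * XAinv (i + 1) * ginvA r n R q (i + 1)

/-- `f_1 = (X_1 - v_1) ⋯ (X_1 - v_d)`. -/
def f1A : AYH r n R q :=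
  ((List.range d).map fun l => XA r n R q 1 - algebraMap R (AYH r n R q) ((v l : R))).prod

/-- The elements `f_i`, defined by `f_{i+1} = g_i f_i g_i`. -/
def fA : ℕ → AYH r n R q
  | 0 => 1
  | 1 => f1A r n d R q v
  | i + 2 => gA r n R q (i + 1) * fA (i + 1) * gA r n R q (i + 1)

/-- The elements `h_i`, defined by `h_1 = f_1`, `h_{i+1} = g_i h_i g_i⁻¹`. -/
def hA : ℕ → AYH r n R q
  | 0 => 1
  | 1 => f1A r n d R q v
  | i + 2 => gA r n R q (i + 1) * hA (i + 1) * ginvA r n R q (i + 1)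

/-- The constant term `a_d = (-1)^d v_1 ⋯ v_d` of `f_1`. -/
def adC : R := (-1) ^ d * ((List.range d).map fun l => ((v l : R))).prod

/-- The Yokonuma–Hecke subalgebra `Y_{r,m} ⊆ Ŷ_{r,n}`, generated by
`t_1, …, t_m, g_1, …, g_{m-1}`. -/
def Ysub (m : ℕ) : Subalgebra R (AYH r n R q) :=
  Algebra.adjoin R
    ({x | ∃ i, 1 ≤ i ∧ i ≤ m ∧ x = tA r n R q i} ∪
     {x | ∃ i, 1 ≤ i ∧ i ≤ m - 1 ∧ x = gA r n R q i})

/-- The Laurent polynomial subalgebra `P_m = R[X_1^{±1},…,X_m^{±1}] ⊆ Ŷ_{r,n}`. -/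
def Psub (m : ℕ) : Subalgebra R (AYH r n R q) :=
  Algebra.adjoin R
    {x | ∃ i, 1 ≤ i ∧ i ≤ m ∧ (x = XA r n R q i ∨ x = XAinv r n R q i)}

/-- The power `X_i^a` for an integer `a`. -/
def XzA (i : ℕ) (a : ℤ) : AYH r n R q :=
  if 0 ≤ a then XA r n R q i ^ a.toNat else XAinv r n R q i ^ (-a).toNat

/-- The monomial `X^α = X_1^{α_1} ⋯ X_n^{α_n}` for `α ∈ ℤ^n`. -/
def XmonA (α : Fin n → ℤ) : AYH r n R q :=
  (List.ofFn fun j : Fin n => XzA r n R q ((j : ℕ) + 1) (α j)).prod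

/-- The element `P_Z = P_{z_1} ⋯ P_{z_k}` (`z_1 < ⋯ < z_k` the elements of `Z`),
where `P_z = f_z` if `α_z ≥ 0` and `P_z = h_z` if `α_z < 0`. -/
def PZA (α : Fin n → ℤ) (Z : Finset (Fin n)) : AYH r n R q :=
  ((Z.sort (· ≤ ·)).map fun z =>
    if 0 ≤ α z then fA r n d R q v ((z : ℕ) + 1) else hA r n d R q v ((z : ℕ) + 1)).prod

/-- The index set `Π_n`: pairs `(α, Z)` with `Z ⊆ {1,…,n}`, `α ∈ ℤ^n` and
`0 ≤ α_i < d` whenever `i ∉ Z`. -/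
def Pin : Type :=
  {p : (Fin n → ℤ) × Finset (Fin n) // ∀ i, i ∉ p.2 → 0 ≤ p.1 i ∧ p.1 i < d}

/-- The polynomial `f_1 = (X_1 - v_1) ⋯ (X_1 - v_d)` in the free algebra. -/
def f1F : F n R :=
  ((List.range d).map fun l => XF n R - algebraMap R (F n R) ((v l : R))).prod

/-- The defining relations of the cyclotomic Yokonuma–Hecke algebra `Y_{r,n}^d`:
the relations of `Ŷ_{r,n}` together with the cyclotomic relation `f_1 = 0`.
The resulting quotient is `Ŷ_{r,n}/J_d`, where `J_d` is the two-sided ideal of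
`Ŷ_{r,n}` generated by `f_1`. -/
inductive CRel : F n R → F n R → Prop
  | base {a b : F n R} : Rel r n R q a b → CRel a b
  | cyc : CRel (f1F n d R v) 0

/-- The cyclotomic Yokonuma–Hecke algebra `Y_{r,n}^d = Ŷ_{r,n}/J_d`. -/
abbrev CYH : Type := RingQuot (CRel r n d R q v)

/-- The canonical projection of the free algebra onto `Y_{r,n}^d`. -/
def mkC : F n R →ₐ[R] CYH r n d R q v := RingQuot.mkAlgHom R (CRel r n d R q v)

/-- The image of `t_i` in `Y_{r,n}^d`. -/
def tC (i : ℕ) : CYH r n d R q v := mkC r n d R q v (tF n R i)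

/-- The image of `g_i` in `Y_{r,n}^d`. -/
def gC (i : ℕ) : CYH r n d R q v := mkC r n d R q v (gF n R i)

/-- The image of `e_i` in `Y_{r,n}^d`. -/
def eC (i : ℕ) : CYH r n d R q v := mkC r n d R q v (eF r n R i)

/-- The idempotent `e_{i,k} = (1/r) ∑_{s=0}^{r-1} t_i^s t_k^{-s}` in `Y_{r,n}^d`. -/
def eijC (i k : ℕ) : CYH r n d R q v :=
  ⅟(r : R) • ∑ s ∈ Finset.range r, tC r n d R q v i ^ s * tC r n d R q v k ^ (r - s)

/-- The element `g_i⁻¹ = g_i - (q - q⁻¹) e_i` in `Y_{r,n}^d`. -/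
def ginvC (i : ℕ) : CYH r n d R q v := gC r n d R q v i - qd R q • eC r n d R q v i

/-- The elements `X_i` of `Y_{r,n}^d`, with `X_{i+1} = g_i X_i g_i`. -/
def XC : ℕ → CYH r n d R q v
  | 0 => 1
  | 1 => mkC r n d R q v (XF n R)
  | i + 2 => gC r n d R q v (i + 1) * XC (i + 1) * gC r n d R q v (i + 1)

/-- The elements `X_i⁻¹` of `Y_{r,n}^d`. -/
def XCinv : ℕ → CYH r n d R q v
  | 0 => 1
  | 1 => mkC r n d R q v (XinvF n R)
  | i + 2 => ginvC r n d R q v (i + 1) * XCinv (i + 1) * ginvC r n d R q v (i + 1)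

/-- Swap the entries at positions `i` and `i+1` of a list. -/
def swapAt (L : List ℕ) (i : ℕ) : List ℕ :=
  (L.set i (L.getD (i + 1) 0)).set (i + 1) (L.getD i 0)

/-- Bubble-sort word: the list of (1-based) positions of the adjacent transpositions
performed when sorting `L`, repeatedly swapping the first adjacent descent. -/
def sortWord : ℕ → List ℕ → List ℕ
  | 0, _ => []
  | fuel + 1, L =>
    match (List.range (L.length - 1)).find? (fun i => L.getD (i + 1) 0 < L.getD i 0) with
    | none => []
    | some i => (i + 1) :: sortWord fuel (swapAt L i)

/-- A canonical reduced word for a permutation `w`, obtained by bubble-sorting its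
one-line notation. -/
def permWord (w : Equiv.Perm (Fin n)) : List ℕ :=
  sortWord (n * n) (List.ofFn fun i => ((w i : Fin n) : ℕ))

/-- The length `l(w)` of a permutation: its number of inversions. -/
def len (w : Equiv.Perm (Fin n)) : ℕ :=
  (Finset.univ.filter fun p : Fin n × Fin n => p.1 < p.2 ∧ w p.2 < w p.1).card

/-- The element `g_w` of `Ŷ_{r,n}` attached to a permutation `w ∈ S_n`
(product of the `g_i` along a reduced word for `w`). -/
def gwA (w : Equiv.Perm (Fin n)) : AYH r n R q :=
  ((permWord n w).map fun i => gA r n R q i).prod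

/-- The element `g_w` of `Y_{r,n}^d`. -/
def gwC (w : Equiv.Perm (Fin n)) : CYH r n d R q v :=
  ((permWord n w).map fun i => gC r n d R q v i).prod

/-- The monomial `t^β = t_1^{β_1} ⋯ t_n^{β_n}` in `Y_{r,n}^d`. -/
def tmonC (β : Fin n → ℕ) : CYH r n d R q v :=
  (List.ofFn fun i : Fin n => tC r n d R q v ((i : ℕ) + 1) ^ β i).prod

/-- The monomial `X^α = X_1^{α_1} ⋯ X_n^{α_n}` (natural exponents) in `Y_{r,n}^d`. -/
def XmonNC (α : Fin n → ℕ) : CYH r n d R q v :=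
  (List.ofFn fun i : Fin n => XC r n d R q v ((i : ℕ) + 1) ^ α i).prod

/-- The subalgebra `Y_{r,m}^d` of `Y_{r,n}^d` (the image of `Y_{r,m}^d` under the canonical
inclusion), generated by `t_1,…,t_m, g_1,…,g_{m-1}, X_1^{±1}`. -/
def YsubC (m : ℕ) : Subalgebra R (CYH r n d R q v) :=
  Algebra.adjoin R
    ({x | ∃ i, 1 ≤ i ∧ i ≤ m ∧ x = tC r n d R q v i} ∪
     {x | ∃ i, 1 ≤ i ∧ i ≤ m - 1 ∧ x = gC r n d R q v i} ∪
     {XC r n d R q v 1, XCinv r n d R q v 1})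

end YH

/-!
Induction on `i`. For `i = 1` one expands `f_1 = ∏ (X_1 - v_l)` in powers of `X_1`. The step
rests on the commutation rule
`g_i X_i^e = X_{i+1}^e g_i - (q - q⁻¹) ∑_{j<e} X_i^j X_{i+1}^{e-j} e_i`,
on `g_i` commuting with `P_{i-1}`, and on `g_i, g_i⁻¹, e_i ∈ Y_{r,i+1}`: so `g_i (p X_i^e y) y'`
with `y' ∈ Y_{r,i+1}` is a combination of terms `p' X_{i+1}^k y''` with `1 ≤ k ≤ e`. This settles
`h_{i+1} = g_i h_i g_i⁻¹` at once, and for `f_{i+1} = g_i f_i g_i` it remains to see that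
`g_i X_i^d g_i - X_{i+1}^d` has degree `< d` in `X_{i+1}`, which holds because the top term of the
commutation rule cancels against `g_i² = 1 + (q - q⁻¹) e_i g_i`.
-/

section PowerSpan

variable {R A : Type*} [CommRing R] [Ring A] [Algebra R A]

theorem mul_mul_mem_of_mem_span {s : Set A} {M : Submodule R A} (a b : A)
    (h : ∀ x ∈ s, a * x * b ∈ M) {x : A} (hx : x ∈ Submodule.span R s) : a * x * b ∈ M :=
  (Submodule.span_le (p := M.comap ((LinearMap.mulRight R b).comp (LinearMap.mulLeft R a)))).2
    h hx

theorem mul_sub_algebraMap_mem_span_pow {x y : A} {E E' : Set ℕ} (c : R)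
    (hE : ∀ e ∈ E, e ∈ E' ∧ e + 1 ∈ E') (hy : y ∈ Submodule.span R ((x ^ ·) '' E)) :
    y * (x - algebraMap R A c) ∈ Submodule.span R ((x ^ ·) '' E') := by
  simpa using mul_mul_mem_of_mem_span 1 (x - algebraMap R A c) (fun z hz => by
    obtain ⟨e, he, rfl⟩ := hz
    rw [one_mul, mul_sub, ← pow_succ, ← Algebra.commutes, ← Algebra.smul_def]
    exact sub_mem (Submodule.subset_span ⟨e + 1, (hE e he).2, rfl⟩)
      (Submodule.smul_mem _ _ (Submodule.subset_span ⟨e, (hE e he).1, rfl⟩))) hy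

theorem list_prod_sub_algebraMap_sub_pow_mem_span (x : A) (c : ℕ → R) (d : ℕ) :
    ((List.range d).map fun l => x - algebraMap R A (c l)).prod - x ^ d ∈
      Submodule.span R ((x ^ ·) '' Set.Iio d) := by
  induction d with
  | zero => simp
  | succ d ih =>
    have key : ((List.range (d + 1)).map fun l => x - algebraMap R A (c l)).prod - x ^ (d + 1) =
        (((List.range d).map fun l => x - algebraMap R A (c l)).prod - x ^ d) *
          (x - algebraMap R A (c d)) - c d • x ^ d := by
      rw [List.range_succ, List.map_append, List.prod_append, List.map_singleton,
        List.prod_singleton, sub_mul _ (x ^ d), mul_sub (x ^ d), ← pow_succ, ← Algebra.commutes,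
        ← Algebra.smul_def]
      abel
    rw [key]
    refine sub_mem (mul_sub_algebraMap_mem_span_pow _ (fun e he => ?_) ih)
      (Submodule.smul_mem _ _ (Submodule.subset_span ⟨d, Set.mem_Iio.2 d.lt_succ_self, rfl⟩))
    simp only [Set.mem_Iio] at he ⊢
    omega

theorem list_prod_sub_algebraMap_sub_const_mem_span (x : A) (c : ℕ → R) (d : ℕ) :
    ((List.range d).map fun l => x - algebraMap R A (c l)).prod -
        algebraMap R A ((-1) ^ d * ((List.range d).map c).prod) ∈
      Submodule.span R ((x ^ ·) '' Set.Icc 1 d) := by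
  induction d with
  | zero => simp
  | succ d ih =>
    set K := (-1) ^ d * ((List.range d).map c).prod
    have hK : (-1) ^ (d + 1) * ((List.range (d + 1)).map c).prod = -(K * c d) := by
      rw [List.range_succ, List.map_append, List.prod_append, List.map_singleton,
        List.prod_singleton]
      ring
    have key : ((List.range (d + 1)).map fun l => x - algebraMap R A (c l)).prod -
          algebraMap R A ((-1) ^ (d + 1) * ((List.range (d + 1)).map c).prod) =
        (((List.range d).map fun l => x - algebraMap R A (c l)).prod - algebraMap R A K) *
          (x - algebraMap R A (c d)) + K • x := by
      rw [hK, List.range_succ, List.map_append, List.prod_append, List.map_singleton,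
        List.prod_singleton, sub_mul _ (algebraMap R A K), mul_sub (algebraMap R A K),
        ← map_mul, map_neg, Algebra.smul_def]
      abel
    rw [key]
    refine add_mem (mul_sub_algebraMap_mem_span_pow _ (fun e he => ?_) ih)
      (Submodule.smul_mem _ _ (Submodule.subset_span ⟨1, ⟨le_rfl, by omega⟩, pow_one x⟩))
    simp only [Set.mem_Icc] at he ⊢
    omega

end PowerSpan

theorem sum_range_pow_mul_pow_sub_comm {S : Type*} [Semiring S] {a b : S} {r : ℕ}
    (hab : Commute a b) (ha : a ^ r = 1) (hb : b ^ r = 1) :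
    ∑ s ∈ Finset.range r, b ^ s * a ^ (r - s) = ∑ s ∈ Finset.range r, a ^ s * b ^ (r - s) := by
  cases r with
  | zero => rfl
  | succ m =>
    -- both sides equal `1 + ∑_{s < m} a^(s+1) b^(m-s)`: reflect the left one, shift the right one
    rw [← Finset.sum_range_reflect, Finset.sum_range_succ, Finset.sum_range_succ']
    simp only [Nat.add_sub_cancel, Nat.sub_self, Nat.sub_zero, pow_zero, one_mul, ha, hb,
      Nat.add_sub_add_right]
    congr 1
    refine Finset.sum_congr rfl fun s hs => ?_
    rw [Finset.mem_range] at hs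
    rw [(hab.pow_pow _ _).symm.eq, show m + 1 - (m - s) = s + 1 by omega]

theorem commute_mul_mul_of_braid {M : Type*} [Monoid M] {g h x : M} (hb : g * h * g = h * g * h)
    (hx : Commute h x) (hxy : Commute x (g * x * g)) :
    Commute (g * x * g) (h * (g * x * g) * h) := by
  have b : ∀ z, g * (h * (g * z)) = h * (g * (h * z)) := fun z => by
    simp only [← mul_assoc, hb]
  have c : ∀ z, h * (x * z) = x * (h * z) := fun z => by
    rw [← mul_assoc, hx.eq, mul_assoc]
  have i : ∀ z, x * (g * (x * (g * z))) = g * (x * (g * (x * z))) := fun z => by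
    simp only [← mul_assoc, hxy.eq]
  suffices ∀ z, g * (x * (g * (h * (g * (x * (g * (h * z))))))) =
      h * (g * (x * (g * (h * (g * (x * (g * z))))))) by
    simpa only [Commute, SemiconjBy, mul_assoc, mul_one] using this 1
  intro z
  conv_lhs => rw [b (x * (g * (h * z))), c (g * (h * z)), ← b z,
    ← c (g * (x * (g * (h * (g * z))))), i (h * (g * z)), b (x * (g * (x * (h * (g * z))))),
    c (g * (x * (h * (g * z)))), ← c (g * z), ← b (x * (g * z))]

namespace YH

section

variable {r n d : ℕ} {R : Type} [CommRing R] [Invertible (r : R)] {q : Rˣ} {v : ℕ → Rˣ}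

local notation "𝐭" => tA r n R q
local notation "𝐠" => gA r n R q
local notation "𝐞" => eA r n R q
local notation "𝐠⁻¹" => ginvA r n R q
local notation "𝐗" => XA r n R q
local notation "𝐗⁻¹" => XAinv r n R q
local notation "𝐏" => Psub r n R q
local notation "𝐘" => Ysub r n R q

theorem mkA_eq_of_rel {a b : F n R} (h : Rel r n R q a b) : mkA r n R q a = mkA r n R q b :=
  RingQuot.mkAlgHom_rel R h

theorem commute_gA_gA {i j : ℕ} (h1 : 1 ≤ i) (h2 : i + 2 ≤ j) (h3 : j ≤ n - 1) :
    Commute (𝐠 i) (𝐠 j) := by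
  simpa only [Commute, SemiconjBy, gA, ← map_mul] using mkA_eq_of_rel (Rel.gg h1 h2 h3)

theorem gA_braid {i : ℕ} (h1 : 1 ≤ i) (h2 : i + 1 ≤ n - 1) :
    𝐠 i * 𝐠 (i + 1) * 𝐠 i = 𝐠 (i + 1) * 𝐠 i * 𝐠 (i + 1) := by
  simpa only [gA, ← map_mul] using mkA_eq_of_rel (Rel.braid h1 h2)

theorem semiconjBy_gA_tA {i j : ℕ} (h1 : 1 ≤ i) (h2 : i ≤ n - 1) (h3 : 1 ≤ j) (h4 : j ≤ n) :
    SemiconjBy (𝐠 i) (𝐭 j) (𝐭 (Equiv.swap i (i + 1) j)) := by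
  simpa only [SemiconjBy, gA, tA, ← map_mul, Equiv.swap_apply_def]
    using mkA_eq_of_rel (Rel.gt h1 h2 h3 h4)

theorem commute_tA_tA {i j : ℕ} (h1 : 1 ≤ i) (h2 : i ≤ n) (h3 : 1 ≤ j) (h4 : j ≤ n) :
    Commute (𝐭 i) (𝐭 j) := by
  simpa only [Commute, SemiconjBy, tA, ← map_mul] using mkA_eq_of_rel (Rel.tt h1 h2 h3 h4)

theorem tA_pow {i : ℕ} (h1 : 1 ≤ i) (h2 : i ≤ n) : 𝐭 i ^ r = 1 := by
  simpa only [tA, ← map_pow, map_one] using mkA_eq_of_rel (Rel.tpow (q := q) h1 h2)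

theorem gA_sq {i : ℕ} (h1 : 1 ≤ i) (h2 : i ≤ n - 1) :
    𝐠 i ^ 2 = 1 + qd R q • (𝐞 i * 𝐠 i) := by
  simpa only [gA, eA, map_pow, map_add, map_one, map_smul, map_mul]
    using mkA_eq_of_rel (Rel.gsq (r := r) h1 h2)

theorem XA_one_mul_XAinv_one : 𝐗 1 * 𝐗⁻¹ 1 = 1 := by
  simpa only [XA, XAinv, ← map_mul, map_one] using mkA_eq_of_rel (r := r) (q := q) Rel.XXinv

theorem XAinv_one_mul_XA_one : 𝐗⁻¹ 1 * 𝐗 1 = 1 := by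
  simpa only [XA, XAinv, ← map_mul, map_one] using mkA_eq_of_rel (r := r) (q := q) Rel.XinvX

theorem commute_XA_one_XA_two : Commute (𝐗 1) (𝐗 2) := by
  have h := mkA_eq_of_rel (r := r) (n := n) (q := q) Rel.gXgX
  simpa only [Commute, SemiconjBy, XA, gA, ← map_mul, mul_assoc] using h.symm

theorem commute_gA_XA_one {i : ℕ} (h1 : 2 ≤ i) (h2 : i ≤ n - 1) : Commute (𝐠 i) (𝐗 1) := by
  simpa only [Commute, SemiconjBy, gA, XA, ← map_mul] using mkA_eq_of_rel (Rel.gX h1 h2)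

theorem commute_tA_XA_one {j : ℕ} (h1 : 1 ≤ j) (h2 : j ≤ n) : Commute (𝐭 j) (𝐗 1) := by
  simpa only [Commute, SemiconjBy, tA, XA, ← map_mul] using mkA_eq_of_rel (Rel.tX h1 h2)

theorem eA_eq (i : ℕ) :
    𝐞 i = ⅟(r : R) • ∑ s ∈ Finset.range r, 𝐭 i ^ s * 𝐭 (i + 1) ^ (r - s) := by
  simp only [eA, eF, tA, map_smul, map_sum, map_mul, map_pow]

theorem commute_gA_eA {i : ℕ} (h1 : 1 ≤ i) (h2 : i ≤ n - 1) : Commute (𝐠 i) (𝐞 i) := by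
  have hswap : ∑ s ∈ Finset.range r, 𝐭 (i + 1) ^ s * 𝐭 i ^ (r - s) =
      ∑ s ∈ Finset.range r, 𝐭 i ^ s * 𝐭 (i + 1) ^ (r - s) :=
    sum_range_pow_mul_pow_sub_comm (commute_tA_tA h1 (by omega) (by omega) (by omega))
      (tA_pow h1 (by omega)) (tA_pow (by omega) (by omega))
  rw [Commute, SemiconjBy, eA_eq, mul_smul_comm, smul_mul_assoc, Finset.mul_sum, ← hswap,
    Finset.sum_mul]
  congr 1
  refine Finset.sum_congr rfl fun s _ => ?_
  simpa only [Equiv.swap_apply_left, Equiv.swap_apply_right]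
    using (((semiconjBy_gA_tA (r := r) (R := R) (q := q) h1 h2 h1 (by omega)).pow_right s).mul_right
      ((semiconjBy_gA_tA (j := i + 1) h1 h2 (by omega) (by omega)).pow_right (r - s))).eq

theorem ginvA_mul_gA {i : ℕ} (h1 : 1 ≤ i) (h2 : i ≤ n - 1) : 𝐠⁻¹ i * 𝐠 i = 1 := by
  rw [ginvA, sub_mul, smul_mul_assoc, ← sq, gA_sq h1 h2, add_sub_cancel_right]

theorem gA_mul_ginvA {i : ℕ} (h1 : 1 ≤ i) (h2 : i ≤ n - 1) : 𝐠 i * 𝐠⁻¹ i = 1 := by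
  rw [ginvA, mul_sub, mul_smul_comm, ← sq, gA_sq h1 h2, (commute_gA_eA h1 h2).eq,
    add_sub_cancel_right]

theorem XA_succ {i : ℕ} (hi : 1 ≤ i) : 𝐗 (i + 1) = 𝐠 i * 𝐗 i * 𝐠 i := by
  obtain ⟨m, rfl⟩ := Nat.exists_eq_add_of_le' hi
  rfl

theorem XAinv_succ {i : ℕ} (hi : 1 ≤ i) : 𝐗⁻¹ (i + 1) = 𝐠⁻¹ i * 𝐗⁻¹ i * 𝐠⁻¹ i := by
  obtain ⟨m, rfl⟩ := Nat.exists_eq_add_of_le' hi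
  rfl

theorem fA_succ {i : ℕ} (hi : 1 ≤ i) : fA r n d R q v (i + 1) = 𝐠 i * fA r n d R q v i * 𝐠 i := by
  obtain ⟨m, rfl⟩ := Nat.exists_eq_add_of_le' hi
  rfl

theorem hA_succ {i : ℕ} (hi : 1 ≤ i) :
    hA r n d R q v (i + 1) = 𝐠 i * hA r n d R q v i * 𝐠⁻¹ i := by
  obtain ⟨m, rfl⟩ := Nat.exists_eq_add_of_le' hi
  rfl

theorem XA_mul_XAinv_and_XAinv_mul_XA {j : ℕ} (hj : j ≤ n) :
    𝐗 j * 𝐗⁻¹ j = 1 ∧ 𝐗⁻¹ j * 𝐗 j = 1 := by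
  induction j with
  | zero => simp [XA, XAinv]
  | succ j ih =>
    rcases Nat.eq_zero_or_pos j with rfl | hj0
    · exact ⟨XA_one_mul_XAinv_one, XAinv_one_mul_XA_one⟩
    obtain ⟨ih1, ih2⟩ := ih (by omega)
    rw [XA_succ hj0, XAinv_succ hj0]
    constructor
    · calc 𝐠 j * 𝐗 j * 𝐠 j * (𝐠⁻¹ j * 𝐗⁻¹ j * 𝐠⁻¹ j)
          = 𝐠 j * (𝐗 j * (𝐠 j * 𝐠⁻¹ j) * 𝐗⁻¹ j) * 𝐠⁻¹ j := by simp only [mul_assoc]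
        _ = 1 := by rw [gA_mul_ginvA hj0 (by omega), mul_one, ih1, mul_one,
          gA_mul_ginvA hj0 (by omega)]
    · calc 𝐠⁻¹ j * 𝐗⁻¹ j * 𝐠⁻¹ j * (𝐠 j * 𝐗 j * 𝐠 j)
          = 𝐠⁻¹ j * (𝐗⁻¹ j * (𝐠⁻¹ j * 𝐠 j) * 𝐗 j) * 𝐠 j := by simp only [mul_assoc]
        _ = 1 := by rw [ginvA_mul_gA hj0 (by omega), mul_one, ih2, mul_one,
          ginvA_mul_gA hj0 (by omega)]

theorem commute_tA_XA {j k : ℕ} (hj1 : 1 ≤ j) (hj2 : j ≤ n) (hk : k ≤ n) :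
    Commute (𝐭 j) (𝐗 k) := by
  induction k generalizing j with
  | zero => exact Commute.one_right _
  | succ k ih =>
    rcases Nat.eq_zero_or_pos k with rfl | hk0
    · exact commute_tA_XA_one hj1 hj2
    set σj := Equiv.swap k (k + 1) j
    have hσj : 1 ≤ σj ∧ σj ≤ n := by
      simp only [σj, Equiv.swap_apply_def]; split_ifs <;> omega
    have hg : 𝐠 k * 𝐭 j = 𝐭 σj * 𝐠 k := semiconjBy_gA_tA hk0 (by omega) hj1 hj2
    have hg' : 𝐠 k * 𝐭 σj = 𝐭 j * 𝐠 k := by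
      simpa only [σj, Equiv.swap_apply_self, SemiconjBy]
        using semiconjBy_gA_tA (r := r) (R := R) (q := q) hk0 (by omega) hσj.1 hσj.2
    rw [XA_succ hk0, Commute, SemiconjBy]
    calc 𝐭 j * (𝐠 k * 𝐗 k * 𝐠 k) = 𝐠 k * (𝐭 σj * 𝐗 k) * 𝐠 k := by
          rw [← mul_assoc, ← mul_assoc, ← hg', mul_assoc (𝐠 k) (𝐭 σj)]
      _ = 𝐠 k * 𝐗 k * (𝐭 σj * 𝐠 k) := by
          rw [(ih hσj.1 hσj.2 (by omega)).eq]; simp only [mul_assoc]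
      _ = 𝐠 k * 𝐗 k * 𝐠 k * 𝐭 j := by rw [← hg]; simp only [mul_assoc]

theorem commute_eA_XA {i k : ℕ} (h1 : 1 ≤ i) (h2 : i + 1 ≤ n) (hk : k ≤ n) :
    Commute (𝐞 i) (𝐗 k) := by
  rw [eA_eq]
  refine (Commute.sum_left _ _ _ fun s _ => ?_).smul_left _
  exact ((commute_tA_XA h1 (by omega) hk).pow_left s).mul_left
    ((commute_tA_XA (by omega) h2 hk).pow_left (r - s))

theorem commute_gA_XA {i j : ℕ} (hij : j < i) (hi : i ≤ n - 1) : Commute (𝐠 i) (𝐗 j) := by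
  induction j with
  | zero => exact Commute.one_right _
  | succ j ih =>
    rcases Nat.eq_zero_or_pos j with rfl | hj0
    · exact commute_gA_XA_one hij hi
    have hg : Commute (𝐠 j) (𝐠 i) := commute_gA_gA hj0 (by omega) hi
    rw [XA_succ hj0]
    exact (hg.symm.mul_right (ih (by omega))).mul_right hg.symm

theorem commute_XA_XA_succ {i : ℕ} (h1 : 1 ≤ i) (h2 : i + 1 ≤ n) : Commute (𝐗 i) (𝐗 (i + 1)) := by
  induction i, h1 using Nat.le_induction with
  | base => exact commute_XA_one_XA_two
  | succ i hi ih =>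
    rw [XA_succ (by omega : 1 ≤ i + 1), XA_succ hi]
    rw [XA_succ hi] at ih
    exact commute_mul_mul_of_braid (gA_braid hi (by omega))
      (commute_gA_XA (by omega) (by omega)) (ih (by omega))

theorem gA_mul_XA {i : ℕ} (h1 : 1 ≤ i) (h2 : i + 1 ≤ n) :
    𝐠 i * 𝐗 i = 𝐗 (i + 1) * 𝐠 i - qd R q • (𝐗 (i + 1) * 𝐞 i) := by
  rw [← mul_smul_comm, ← mul_sub, ← ginvA, XA_succ h1, mul_assoc, gA_mul_ginvA h1 (by omega),
    mul_one]

theorem gA_mul_XA_pow {i : ℕ} (h1 : 1 ≤ i) (h2 : i + 1 ≤ n) (e : ℕ) :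
    𝐠 i * 𝐗 i ^ e = 𝐗 (i + 1) ^ e * 𝐠 i -
      qd R q • ∑ j ∈ Finset.range e, 𝐗 i ^ j * 𝐗 (i + 1) ^ (e - j) * 𝐞 i := by
  induction e with
  | zero => simp
  | succ e ih =>
    have hX : Commute (𝐗 i) (𝐗 (i + 1)) := commute_XA_XA_succ h1 h2
    have heX : Commute (𝐞 i) (𝐗 i) := commute_eA_XA h1 h2 (by omega)
    have hsum : (∑ j ∈ Finset.range e, 𝐗 i ^ j * 𝐗 (i + 1) ^ (e - j) * 𝐞 i) * 𝐗 i =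
        ∑ j ∈ Finset.range e, 𝐗 i ^ (j + 1) * 𝐗 (i + 1) ^ (e + 1 - (j + 1)) * 𝐞 i := by
      rw [Finset.sum_mul]
      refine Finset.sum_congr rfl fun j _ => ?_
      rw [Nat.add_sub_add_right, mul_assoc _ (𝐞 i), heX.eq, ← mul_assoc, mul_assoc (𝐗 i ^ j),
        ((hX.symm.pow_left _).eq), ← mul_assoc, ← pow_succ]
    rw [pow_succ, ← mul_assoc, ih, sub_mul, smul_mul_assoc, hsum, mul_assoc, gA_mul_XA h1 h2,
      mul_sub, mul_smul_comm, ← mul_assoc, ← pow_succ, Finset.sum_range_succ',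
      pow_zero, one_mul, Nat.sub_zero, smul_add, ← mul_assoc, ← pow_succ]
    abel

theorem XA_mem_Psub {k m : ℕ} (h1 : 1 ≤ k) (h2 : k ≤ m) : 𝐗 k ∈ 𝐏 m :=
  Algebra.subset_adjoin ⟨k, h1, h2, Or.inl rfl⟩

theorem Psub_mono {m m' : ℕ} (h : m ≤ m') : 𝐏 m ≤ 𝐏 m' :=
  Algebra.adjoin_mono fun _ ⟨k, hk1, hk2, hx⟩ => ⟨k, hk1, hk2.trans h, hx⟩

theorem gA_mem_Ysub {k m : ℕ} (h1 : 1 ≤ k) (h2 : k ≤ m - 1) : 𝐠 k ∈ 𝐘 m :=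
  Algebra.subset_adjoin (Or.inr ⟨k, h1, h2, rfl⟩)

theorem Ysub_mono {m m' : ℕ} (h : m ≤ m') : 𝐘 m ≤ 𝐘 m' := by
  refine Algebra.adjoin_mono ?_
  rintro x (⟨k, hk1, hk2, hx⟩ | ⟨k, hk1, hk2, hx⟩)
  · exact Or.inl ⟨k, hk1, by omega, hx⟩
  · exact Or.inr ⟨k, hk1, by omega, hx⟩

theorem eA_mem_Ysub {i : ℕ} (h1 : 1 ≤ i) : 𝐞 i ∈ 𝐘 (i + 1) := by
  have ht : ∀ k, 1 ≤ k → k ≤ i + 1 → 𝐭 k ∈ 𝐘 (i + 1) :=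
    fun k hk1 hk2 => Algebra.subset_adjoin (Or.inl ⟨k, hk1, hk2, rfl⟩)
  rw [eA_eq]
  exact Subalgebra.smul_mem _ (Subalgebra.sum_mem _ fun s _ =>
    mul_mem (pow_mem (ht i h1 (by omega)) s) (pow_mem (ht (i + 1) (by omega) le_rfl) _)) _

theorem ginvA_mem_Ysub {i : ℕ} (h1 : 1 ≤ i) : 𝐠⁻¹ i ∈ 𝐘 (i + 1) :=
  sub_mem (gA_mem_Ysub h1 (by omega)) (Subalgebra.smul_mem _ (eA_mem_Ysub h1) _)

theorem commute_gA_of_mem_Psub {i : ℕ} (hi : i ≤ n - 1) {p : AYH r n R q} (hp : p ∈ 𝐏 (i - 1)) :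
    Commute (𝐠 i) p := by
  suffices 𝐏 (i - 1) ≤ Subalgebra.centralizer R {𝐠 i} from
    (Subalgebra.mem_centralizer_iff R).1 (this hp) _ rfl
  refine Algebra.adjoin_le ?_
  rintro _ ⟨j, hj1, hj2, rfl | rfl⟩ <;> rw [SetLike.mem_coe, Subalgebra.mem_centralizer_iff] <;>
    rintro _ rfl
  · exact commute_gA_XA (i := i) (by omega) hi
  · obtain ⟨h1, h2⟩ := XA_mul_XAinv_and_XAinv_mul_XA (r := r) (n := n) (R := R) (q := q)
      (j := j) (by omega)
    exact (commute_gA_XA (i := i) (by omega) hi).units_inv_right (u := ⟨_, _, h1, h2⟩)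

variable (r n R q) in
/-- `∑_{e ∈ E} P_{i-1} X_i^e Y_{r,i}`. -/
def spanPXY (E : Set ℕ) (i : ℕ) : Submodule R (AYH r n R q) :=
  Submodule.span R {x | ∃ e ∈ E, ∃ p ∈ 𝐏 (i - 1), ∃ y ∈ 𝐘 i, x = p * 𝐗 i ^ e * y}

theorem span_XA_pow_le_spanPXY (E : Set ℕ) (i : ℕ) :
    Submodule.span R ((𝐗 i ^ ·) '' E) ≤ spanPXY r n R q E i := by
  refine Submodule.span_mono ?_
  rintro _ ⟨e, he, rfl⟩
  exact ⟨e, he, 1, one_mem _, 1, one_mem _, by rw [one_mul, mul_one]⟩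

theorem gA_mul_mul_mem_spanPXY {E : Set ℕ} (hE : ∀ e ∈ E, ∀ k, 1 ≤ k → k ≤ e → k ∈ E) {i : ℕ}
    (h1 : 1 ≤ i) (h2 : i + 1 ≤ n) {x y : AYH r n R q} (hx : x ∈ spanPXY r n R q E i)
    (hy : y ∈ 𝐘 (i + 1)) : 𝐠 i * x * y ∈ spanPXY r n R q E (i + 1) := by
  refine mul_mul_mem_of_mem_span _ _ ?_ hx
  rintro _ ⟨e, he, p, hp, y₀, hy₀, rfl⟩
  have hp' : p ∈ 𝐏 i := Psub_mono (by omega) hp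
  have hy₀' : y₀ ∈ 𝐘 (i + 1) := Ysub_mono (by omega) hy₀
  have key : 𝐠 i * (p * 𝐗 i ^ e * y₀) * y = p * 𝐗 (i + 1) ^ e * (𝐠 i * y₀ * y) -
      qd R q • ∑ j ∈ Finset.range e, p * 𝐗 i ^ j * 𝐗 (i + 1) ^ (e - j) * (𝐞 i * y₀ * y) := by
    rw [← mul_assoc, ← mul_assoc, (commute_gA_of_mem_Psub (by omega) hp).eq, mul_assoc p,
      gA_mul_XA_pow h1 h2]
    simp only [mul_sub, sub_mul, mul_smul_comm, smul_mul_assoc, Finset.mul_sum, Finset.sum_mul,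
      mul_assoc]
  rw [key]
  refine sub_mem (Submodule.subset_span ⟨e, he, p, by simpa using hp', _,
    mul_mem (mul_mem (gA_mem_Ysub h1 (by omega)) hy₀') hy, by simp only [mul_assoc]⟩)
    (Submodule.smul_mem _ _ (Submodule.sum_mem _ fun j hj => ?_))
  rw [Finset.mem_range] at hj
  exact Submodule.subset_span ⟨e - j, hE e he _ (by omega) (by omega), p * 𝐗 i ^ j,
    by simpa using mul_mem hp' (pow_mem (XA_mem_Psub h1 le_rfl) j), _,
    mul_mem (mul_mem (eA_mem_Ysub h1) hy₀') hy, by simp only [mul_assoc]⟩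

theorem gA_mul_XA_pow_mul_gA_sub_mem_spanPXY {i : ℕ} (h1 : 1 ≤ i) (h2 : i + 1 ≤ n) (hd : 1 ≤ d) :
    𝐠 i * 𝐗 i ^ d * 𝐠 i - 𝐗 (i + 1) ^ d ∈ spanPXY r n R q (Set.Iio d) (i + 1) := by
  obtain ⟨c, rfl⟩ := Nat.exists_eq_add_of_le' hd
  have key : 𝐠 i * 𝐗 i ^ (c + 1) * 𝐠 i - 𝐗 (i + 1) ^ (c + 1) =
      -(qd R q • ∑ j ∈ Finset.range c,
          𝐗 i ^ (j + 1) * 𝐗 (i + 1) ^ (c - j) * (𝐞 i * 𝐠 i)) := by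
    rw [gA_mul_XA_pow h1 h2, Finset.sum_range_succ', sub_mul, smul_mul_assoc, add_mul,
      Finset.sum_mul, mul_assoc (𝐗 (i + 1) ^ (c + 1)), ← sq, gA_sq h1 (by omega)]
    simp only [pow_zero, one_mul, Nat.sub_zero, Nat.add_sub_add_right, mul_add, mul_one,
      smul_add, mul_assoc, mul_smul_comm]
    abel
  rw [key]
  refine neg_mem (Submodule.smul_mem _ _ (Submodule.sum_mem _ fun j hj => ?_))
  rw [Finset.mem_range] at hj
  exact Submodule.subset_span ⟨c - j, by simp only [Set.mem_Iio]; omega, _,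
    pow_mem (XA_mem_Psub h1 (by omega)) (j + 1), _,
    mul_mem (eA_mem_Ysub h1) (gA_mem_Ysub h1 (by omega)), by simp only [mul_assoc]⟩

theorem fA_sub_XA_pow_mem_spanPXY (hd : 1 ≤ d) {i : ℕ} (h1 : 1 ≤ i) (h2 : i ≤ n) :
    fA r n d R q v i - 𝐗 i ^ d ∈ spanPXY r n R q (Set.Iio d) i := by
  induction i, h1 using Nat.le_induction with
  | base =>
    exact span_XA_pow_le_spanPXY _ 1
      (list_prod_sub_algebraMap_sub_pow_mem_span (𝐗 1) (fun l => (v l : R)) d)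
  | succ i hi ih =>
    have hsplit : fA r n d R q v (i + 1) - 𝐗 (i + 1) ^ d =
        𝐠 i * (fA r n d R q v i - 𝐗 i ^ d) * 𝐠 i + (𝐠 i * 𝐗 i ^ d * 𝐠 i - 𝐗 (i + 1) ^ d) := by
      rw [fA_succ hi, mul_sub, sub_mul]
      abel
    rw [hsplit]
    exact add_mem (gA_mul_mul_mem_spanPXY (fun e he k _ hk => lt_of_le_of_lt hk he) hi h2
      (ih (by omega)) (gA_mem_Ysub hi (by omega))) (gA_mul_XA_pow_mul_gA_sub_mem_spanPXY hi h2 hd)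

theorem hA_sub_algebraMap_mem_spanPXY {i : ℕ} (h1 : 1 ≤ i) (h2 : i ≤ n) :
    hA r n d R q v i - algebraMap R (AYH r n R q) (adC d R v) ∈
      spanPXY r n R q (Set.Icc 1 d) i := by
  induction i, h1 using Nat.le_induction with
  | base =>
    exact span_XA_pow_le_spanPXY _ 1
      (list_prod_sub_algebraMap_sub_const_mem_span (𝐗 1) (fun l => (v l : R)) d)
  | succ i hi ih =>
    have hconj : 𝐠 i * algebraMap R (AYH r n R q) (adC d R v) * 𝐠⁻¹ i =
        algebraMap R (AYH r n R q) (adC d R v) := by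
      rw [← Algebra.commutes, mul_assoc, gA_mul_ginvA hi (by omega), mul_one]
    rw [hA_succ hi, ← hconj, ← sub_mul, ← mul_sub]
    exact gA_mul_mul_mem_spanPXY (E := Set.Icc 1 d) (fun e he k hk1 hk => ⟨hk1, hk.trans he.2⟩)
      hi h2 (ih (by omega)) (ginvA_mem_Ysub hi)

end

theorem fi_hi_expansion_general
    (r n d : ℕ) (hd : 1 ≤ d)
    (R : Type) [CommRing R] [Invertible (r : R)] (q : Rˣ) (v : ℕ → Rˣ)
    (i : ℕ) (hi1 : 1 ≤ i) (hi2 : i ≤ n) :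
    fA r n d R q v i - XA r n R q i ^ d ∈
      Submodule.span R {x : AYH r n R q | ∃ e, e < d ∧
        ∃ p ∈ Psub r n R q (i - 1), ∃ y ∈ Ysub r n R q i,
          x = p * XA r n R q i ^ e * y} ∧
    hA r n d R q v i - algebraMap R (AYH r n R q) (adC d R v) ∈
      Submodule.span R {x : AYH r n R q | ∃ f, 1 ≤ f ∧ f ≤ d ∧
        ∃ p ∈ Psub r n R q (i - 1), ∃ y ∈ Ysub r n R q i,
          x = p * XA r n R q i ^ f * y} :=
  ⟨fA_sub_XA_pow_mem_spanPXY hd hi1 hi2, by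
    simpa only [spanPXY, Set.mem_Icc, and_assoc] using hA_sub_algebraMap_mem_spanPXY hi1 hi2⟩

/-- For each `i = 1, …, n`,
`f_i ∈ X_i^d + Σ_{e=0}^{d-1} P_{i-1} X_i^e Y_{r,i}` and
`h_i ∈ a_d + Σ_{f=1}^{d} P_{i-1} X_i^f Y_{r,i}`, where `P_{i-1} = R[X_1^{±1},…,X_{i-1}^{±1}]`
and `Y_{r,i}` is the `R`-subalgebra of `Ŷ_{r,n}` generated by `t_1,…,t_i,g_1,…,g_{i-1}`. -/
theorem fi_hi_expansion
    (r n d : ℕ) (hr : 1 ≤ r) (hn : 1 ≤ n) (hd : 1 ≤ d)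
    (R : Type) [CommRing R] [Invertible (r : R)] (q : Rˣ) (v : ℕ → Rˣ)
    (i : ℕ) (hi1 : 1 ≤ i) (hi2 : i ≤ n) :
    fA r n d R q v i - XA r n R q i ^ d ∈
      Submodule.span R {x : AYH r n R q | ∃ e, e < d ∧
        ∃ p ∈ Psub r n R q (i - 1), ∃ y ∈ Ysub r n R q i,
          x = p * XA r n R q i ^ e * y} ∧
    hA r n d R q v i - algebraMap R (AYH r n R q) (adC d R v) ∈
      Submodule.span R {x : AYH r n R q | ∃ f, 1 ≤ f ∧ f ≤ d ∧
        ∃ p ∈ Psub r n R q (i - 1), ∃ y ∈ Ysub r n R q i,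
          x = p * XA r n R q i ^ f * y} :=
  fi_hi_expansion_general r n d hd R q v i hi1 hi2

end YH
end
end

section
/- In Y_{r,n+1}^d the element X_{n+1}^d + a_d lies in Y_{r,n}^d g_n Y_{r,n}^d + Σ_{k=1}^{d−1} Σ_{s=0}^{r−1} X_{n+1}^k t_{n+1}^s Y_{r,n}^d, where a_d = (−1)^d v_1⋯v_d and Y_{r,n}^d g_n Y_{r,n}^d is the R-span of all products u g_n v with u, v ∈ Y_{r,n}^d. -/
noncomputable section

namespace YH

lemma lcomm {A : Type*} [Semigroup A] {a b : A} (h : a * b = b * a) (c : A) :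
    a * (b * c) = b * (a * c) := by rw [← mul_assoc, h, mul_assoc]

lemma lswap {A : Type*} [Semigroup A] {a b c e : A} (h : a * b = c * e) (z : A) :
    a * (b * z) = c * (e * z) := by rw [← mul_assoc, h, mul_assoc]

lemma conj_swap {A : Type*} [Semigroup A] {a x c c' : A} (h1 : c * a = a * c')
    (h2 : c' * x = x * c') (h3 : c' * a = a * c) :
    c * (a * x * a) = a * x * a * c := by
  rw [mul_assoc a x a, ← mul_assoc, h1, mul_assoc, lcomm h2, h3]
  simp only [mul_assoc]

section Aux

variable {r n d : ℕ} {R : Type} [CommRing R] [Invertible (r : R)] {q : Rˣ} {v : ℕ → Rˣ}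

lemma aux_rel {a b : F n R} (h : Rel r n R q a b) :
    mkC r n d R q v a = mkC r n d R q v b :=
  RingQuot.mkAlgHom_rel R (CRel.base h)

lemma tC_out {i : ℕ} (h : ¬(1 ≤ i ∧ i ≤ n)) : tC r n d R q v i = 1 := by
  rw [tC, tF, dif_neg h, map_one]

lemma gC_out {i : ℕ} (h : ¬(1 ≤ i ∧ i ≤ n - 1)) : gC r n d R q v i = 1 := by
  rw [gC, gF, dif_neg h, map_one]

lemma t_comm (i j : ℕ) :
    tC r n d R q v i * tC r n d R q v j = tC r n d R q v j * tC r n d R q v i := by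
  by_cases hi : 1 ≤ i ∧ i ≤ n
  · by_cases hj : 1 ≤ j ∧ j ≤ n
    · simpa only [tC, map_mul] using aux_rel (r := r) (d := d) (v := v) (q := q)
        (Rel.tt hi.1 hi.2 hj.1 hj.2)
    · rw [tC_out hj, one_mul, mul_one]
  · rw [tC_out hi, one_mul, mul_one]

lemma t_pow_r (i : ℕ) : tC r n d R q v i ^ r = 1 := by
  by_cases hi : 1 ≤ i ∧ i ≤ n
  · simpa only [tC, map_pow, map_one] using aux_rel (r := r) (d := d) (v := v) (q := q)
      (Rel.tpow hi.1 hi.2)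
  · rw [tC_out hi, one_pow]

lemma t_pow_mod (i a : ℕ) : tC r n d R q v i ^ a = tC r n d R q v i ^ (a % r) := by
  conv_lhs => rw [← Nat.div_add_mod a r]
  rw [pow_add, pow_mul, t_pow_r, one_pow, one_mul]

lemma g_t {i j : ℕ} (h1 : 1 ≤ i) (h2 : i ≤ n - 1) (h3 : 1 ≤ j) (h4 : j ≤ n) :
    gC r n d R q v i * tC r n d R q v j =
      tC r n d R q v (if j = i then i + 1 else if j = i + 1 then i else j) *
        gC r n d R q v i := by
  simpa only [gC, tC, map_mul] using aux_rel (r := r) (d := d) (v := v) (q := q)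
    (Rel.gt h1 h2 h3 h4)

lemma g_t_pow {i j j' : ℕ} (h1 : 1 ≤ i) (h2 : i ≤ n - 1) (h3 : 1 ≤ j) (h4 : j ≤ n)
    (hj' : j' = if j = i then i + 1 else if j = i + 1 then i else j) (a : ℕ) :
    gC r n d R q v i * tC r n d R q v j ^ a = tC r n d R q v j' ^ a * gC r n d R q v i := by
  subst hj'
  induction a with
  | zero => simp
  | succ a ih =>
      rw [pow_succ, ← mul_assoc, ih, mul_assoc, g_t h1 h2 h3 h4, ← mul_assoc, ← pow_succ]

lemma g_t_pow_self {i : ℕ} (h1 : 1 ≤ i) (h2 : i ≤ n - 1) (a : ℕ) :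
    gC r n d R q v i * tC r n d R q v i ^ a =
      tC r n d R q v (i + 1) ^ a * gC r n d R q v i :=
  g_t_pow h1 h2 h1 (by omega) (by simp) a

lemma g_t_pow_succ {i : ℕ} (h1 : 1 ≤ i) (h2 : i ≤ n - 1) (a : ℕ) :
    gC r n d R q v i * tC r n d R q v (i + 1) ^ a =
      tC r n d R q v i ^ a * gC r n d R q v i :=
  g_t_pow h1 h2 (by omega) (by omega) (by rw [if_neg (by omega), if_pos rfl]) a

lemma g_t_comm {i j : ℕ} (h1 : 1 ≤ i) (h2 : i ≤ n - 1) (hj1 : j ≠ i) (hj2 : j ≠ i + 1) :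
    gC r n d R q v i * tC r n d R q v j = tC r n d R q v j * gC r n d R q v i := by
  by_cases hj : 1 ≤ j ∧ j ≤ n
  · rw [g_t h1 h2 hj.1 hj.2, if_neg hj1, if_neg hj2]
  · rw [tC_out hj, one_mul, mul_one]

lemma g_braid {i : ℕ} (h1 : 1 ≤ i) (h2 : i + 1 ≤ n - 1) :
    gC r n d R q v i * gC r n d R q v (i + 1) * gC r n d R q v i =
      gC r n d R q v (i + 1) * gC r n d R q v i * gC r n d R q v (i + 1) := by
  simpa only [gC, map_mul] using aux_rel (r := r) (d := d) (v := v) (q := q)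
    (Rel.braid h1 h2)

lemma g_g_comm {i j : ℕ} (h1 : 1 ≤ i) (h2 : i + 2 ≤ j) :
    gC r n d R q v i * gC r n d R q v j = gC r n d R q v j * gC r n d R q v i := by
  by_cases hj : j ≤ n - 1
  · simpa only [gC, map_mul] using aux_rel (r := r) (d := d) (v := v) (q := q)
      (Rel.gg h1 h2 hj)
  · rw [gC_out (i := j) (by omega), one_mul, mul_one]

lemma XC_one' : XC r n d R q v 1 = mkC r n d R q v (XF n R) := rfl
lemma XC_zero' : XC r n d R q v 0 = 1 := rfl
lemma XCinv_one' : XCinv r n d R q v 1 = mkC r n d R q v (XinvF n R) := rfl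
lemma XC_succ (k : ℕ) :
    XC r n d R q v (k + 2) =
      gC r n d R q v (k + 1) * XC r n d R q v (k + 1) * gC r n d R q v (k + 1) := rfl

lemma XC_succ' {k : ℕ} (hk : 1 ≤ k) :
    XC r n d R q v (k + 1) = gC r n d R q v k * XC r n d R q v k * gC r n d R q v k := by
  obtain ⟨k', rfl⟩ : ∃ k', k = k' + 1 := ⟨k - 1, by omega⟩
  rfl

lemma X_Xinv : XC r n d R q v 1 * XCinv r n d R q v 1 = 1 := by
  simpa only [XC_one', XCinv_one', map_mul, map_one] using
    aux_rel (r := r) (d := d) (v := v) (q := q) Rel.XXinv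

lemma Xinv_X : XCinv r n d R q v 1 * XC r n d R q v 1 = 1 := by
  simpa only [XC_one', XCinv_one', map_mul, map_one] using
    aux_rel (r := r) (d := d) (v := v) (q := q) Rel.XinvX

/-- `X₁` as a unit. -/
def XU : (CYH r n d R q v)ˣ :=
  ⟨XC r n d R q v 1, XCinv r n d R q v 1, X_Xinv, Xinv_X⟩

lemma t_X1 (j : ℕ) :
    tC r n d R q v j * XC r n d R q v 1 = XC r n d R q v 1 * tC r n d R q v j := by
  by_cases hj : 1 ≤ j ∧ j ≤ n
  · simpa only [tC, XC_one', map_mul] using aux_rel (r := r) (d := d) (v := v) (q := q)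
      (Rel.tX hj.1 hj.2)
  · rw [tC_out hj, one_mul, mul_one]

lemma t_Xinv1 (j : ℕ) :
    tC r n d R q v j * XCinv r n d R q v 1 = XCinv r n d R q v 1 * tC r n d R q v j := by
  have h : Commute (tC r n d R q v j) ((XU (r := r) (n := n) (d := d) (R := R) (q := q) (v := v) : (CYH r n d R q v)ˣ) : CYH r n d R q v) := t_X1 j
  exact h.units_inv_right

lemma g_X1 {i : ℕ} (h2 : 2 ≤ i) :
    gC r n d R q v i * XC r n d R q v 1 = XC r n d R q v 1 * gC r n d R q v i := by
  by_cases hi : i ≤ n - 1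
  · simpa only [gC, XC_one', map_mul] using aux_rel (r := r) (d := d) (v := v) (q := q)
      (Rel.gX h2 hi)
  · rw [gC_out (by omega), one_mul, mul_one]

lemma g_Xinv1 {i : ℕ} (h2 : 2 ≤ i) :
    gC r n d R q v i * XCinv r n d R q v 1 = XCinv r n d R q v 1 * gC r n d R q v i := by
  have h : Commute (gC r n d R q v i) ((XU (r := r) (n := n) (d := d) (R := R) (q := q) (v := v) : (CYH r n d R q v)ˣ) : CYH r n d R q v) := g_X1 h2
  exact h.units_inv_right

lemma gXgX1 :
    gC r n d R q v 1 * XC r n d R q v 1 * gC r n d R q v 1 * XC r n d R q v 1 =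
      XC r n d R q v 1 * gC r n d R q v 1 * XC r n d R q v 1 * gC r n d R q v 1 := by
  simpa only [gC, XC_one', map_mul] using aux_rel (r := r) (d := d) (v := v) (q := q)
    Rel.gXgX

lemma g_sq {i : ℕ} (h1 : 1 ≤ i) (h2 : i ≤ n - 1) :
    gC r n d R q v i ^ 2 =
      1 + qd R q • (eijC r n d R q v i (i + 1) * gC r n d R q v i) := by
  have h := aux_rel (r := r) (n := n) (d := d) (R := R) (q := q) (v := v) (Rel.gsq h1 h2)
  simpa only [map_pow, map_add, map_one, map_smul, map_mul, map_sum, eF, eijC, gC, tC]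
    using h

end Aux
end YH
namespace YH
section Aux2

variable {r n d : ℕ} {R : Type} [CommRing R] [Invertible (r : R)] {q : Rˣ} {v : ℕ → Rˣ}

lemma t_X : ∀ m j, tC r n d R q v j * XC r n d R q v m = XC r n d R q v m * tC r n d R q v j
  | 0, j => by rw [XC_zero', one_mul, mul_one]
  | 1, j => t_X1 j
  | (m + 2), j => by
      rw [XC_succ]
      by_cases hj : 1 ≤ j ∧ j ≤ n
      · by_cases hi : m + 1 ≤ n - 1
        · set i := m + 1 with hidef
          have hb1 : 1 ≤ i := by omega
          set j' := if j = i then i + 1 else if j = i + 1 then i else j with hj'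
          have hj'b : 1 ≤ j' ∧ j' ≤ n := by rw [hj']; split_ifs <;> omega
          have h0 : gC r n d R q v i * tC r n d R q v j = tC r n d R q v j' * gC r n d R q v i :=
            g_t hb1 hi hj.1 hj.2
          have h1 : gC r n d R q v i * tC r n d R q v j' = tC r n d R q v j * gC r n d R q v i := by
            rw [g_t hb1 hi hj'b.1 hj'b.2]
            congr 2
            rw [hj']; split_ifs <;> omega
          exact conj_swap h1.symm (t_X (m + 1) j') h0.symm
        · have hbad : ¬(1 ≤ m + 1 ∧ m + 1 ≤ n - 1) := by omega
          have hout : gC r n d R q v (m + 1) = 1 := gC_out hbad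
          rw [hout, one_mul, mul_one]
          exact t_X (m + 1) j
      · rw [tC_out hj, one_mul, mul_one]

lemma g_X_high : ∀ m i, m + 1 ≤ i →
    gC r n d R q v i * XC r n d R q v m = XC r n d R q v m * gC r n d R q v i
  | 0, i, _ => by rw [XC_zero', one_mul, mul_one]
  | 1, i, hi => g_X1 hi
  | (m + 2), i, hi => by
      rw [XC_succ]
      have h1 : gC r n d R q v i * gC r n d R q v (m + 1) =
          gC r n d R q v (m + 1) * gC r n d R q v i :=
        (g_g_comm (by omega) (by omega)).symm
      exact conj_swap h1 (g_X_high (m + 1) i (by omega)) h1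

/-- The `gXgX` relation at level `m`. -/
lemma gXgX : ∀ m, 1 ≤ m →
    gC r n d R q v m * XC r n d R q v m * gC r n d R q v m * XC r n d R q v m =
      XC r n d R q v m * gC r n d R q v m * XC r n d R q v m * gC r n d R q v m
  | 0, h => by omega
  | 1, _ => gXgX1
  | (p + 2), _ => by
      by_cases hb : p + 2 ≤ n - 1
      · set g := gC r n d R q v (p + 1) with hgdef
        set h := gC r n d R q v (p + 2) with hhdef
        set x := XC r n d R q v (p + 1) with hxdef
        have hQ : g * x * g * x = x * g * x * g := gXgX (p + 1) (by omega)
        have hbr : g * h * g = h * g * h := g_braid (by omega) hb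
        have hcm : h * x = x * h := g_X_high (p + 1) (p + 2) (by omega)
        have hXd : XC r n d R q v (p + 2) = g * x * g := rfl
        rw [hXd]
        have hbr' : ∀ z, g * (h * (g * z)) = h * (g * (h * z)) := by
          intro z; rw [← mul_assoc, ← mul_assoc, hbr, mul_assoc, mul_assoc]
        have hbr'' : ∀ z, h * (g * (h * z)) = g * (h * (g * z)) := fun z => (hbr' z).symm
        have hbrr : h * (g * h) = g * (h * g) := by
          rw [← mul_assoc, ← hbr, mul_assoc]
        have hxh : ∀ z, x * (h * z) = h * (x * z) := lcomm hcm.symm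
        have hQ' : ∀ z, g * (x * (g * (x * z))) = x * (g * (x * (g * z))) := by
          intro z
          rw [← mul_assoc, ← mul_assoc, ← mul_assoc, hQ, mul_assoc, mul_assoc, mul_assoc]
        simp only [mul_assoc]
        -- LHS : h (g (x (g (h (g (x g))))))   RHS : g (x (g (h (g (x (g h))))))
        conv_lhs => rw [hbr', lcomm hcm, hxh, hbr'', hQ']
        conv_rhs => rw [hbr', lcomm hcm, hxh, hbrr]
      · have hout : gC r n d R q v (p + 2) = 1 := gC_out (by omega)
        rw [hout]
        simp

lemma X_adj_comm (m : ℕ) :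
    XC r n d R q v m * XC r n d R q v (m + 1) =
      XC r n d R q v (m + 1) * XC r n d R q v m := by
  match m with
  | 0 => rw [XC_zero', one_mul, mul_one]
  | (k + 1) =>
      rw [XC_succ]
      simp only [← mul_assoc]
      exact (gXgX (k + 1) (by omega)).symm

end Aux2
end YH
namespace YH

lemma sum_range_zmod {M : Type*} [AddCommMonoid M] {r : ℕ} [NeZero r] (f : ℕ → M) :
    ∑ s ∈ Finset.range r, f s = ∑ z : ZMod r, f z.val := by
  refine Finset.sum_nbij' (fun s => ((s : ℕ) : ZMod r)) (fun z => z.val)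
    (fun a _ => Finset.mem_univ _) (fun z _ => Finset.mem_range.mpr (ZMod.val_lt z))
    (fun a ha => ZMod.val_cast_of_lt (Finset.mem_range.mp ha))
    (fun z _ => ZMod.natCast_rightInverse z) (fun a ha => ?_)
  rw [ZMod.val_cast_of_lt (Finset.mem_range.mp ha)]

section Aux3

variable {r n d : ℕ} {R : Type} [CommRing R] [Invertible (r : R)] {q : Rˣ} {v : ℕ → Rˣ}

lemma commute_tt (i j : ℕ) : Commute (tC r n d R q v i) (tC r n d R q v j) := t_comm i j

lemma commute_Xt (m j : ℕ) : Commute (XC r n d R q v m) (tC r n d R q v j) :=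
  (t_X m j).symm

lemma E_z [NeZero r] (m : ℕ) :
    eijC r n d R q v m (m + 1) =
      ⅟(r : R) • ∑ z : ZMod r,
        tC r n d R q v m ^ z.val * tC r n d R q v (m + 1) ^ (-z).val := by
  rw [eijC, sum_range_zmod]
  congr 1
  refine Finset.sum_congr rfl fun z _ => ?_
  congr 1
  rw [t_pow_mod]
  congr 1
  rcases eq_or_ne z 0 with h0 | h0
  · subst h0; simp
  · have h1 : (-z).val = r - z.val := by rw [ZMod.neg_val, if_neg h0]
    have h2 := ZMod.val_lt z
    have h3 : z.val ≠ 0 := fun h => h0 ((ZMod.val_eq_zero z).mp h)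
    rw [h1, Nat.mod_eq_of_lt (by omega)]

lemma tz_add [NeZero r] (i : ℕ) (z w : ZMod r) :
    tC r n d R q v i ^ (z + w).val = tC r n d R q v i ^ z.val * tC r n d R q v i ^ w.val := by
  rw [ZMod.val_add, ← t_pow_mod, pow_add]

lemma commute_t_E (j m k : ℕ) : Commute (tC r n d R q v j) (eijC r n d R q v m k) := by
  rw [eijC]
  refine Commute.smul_right ?_ _
  refine Commute.sum_right _ _ _ fun s _ => ?_
  exact Commute.mul_right ((commute_tt j m).pow_right s) ((commute_tt j k).pow_right (r - s))

lemma commute_X_E (i m k : ℕ) : Commute (XC r n d R q v i) (eijC r n d R q v m k) := by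
  rw [eijC]
  refine Commute.smul_right ?_ _
  refine Commute.sum_right _ _ _ fun s _ => ?_
  exact Commute.mul_right ((commute_Xt i m).pow_right s) ((commute_Xt i k).pow_right (r - s))

lemma g_E [NeZero r] {m : ℕ} (h1 : 1 ≤ m) (h2 : m ≤ n - 1) :
    gC r n d R q v m * eijC r n d R q v m (m + 1) =
      eijC r n d R q v m (m + 1) * gC r n d R q v m := by
  rw [E_z, mul_smul_comm, smul_mul_assoc]
  congr 1
  rw [Finset.mul_sum, Finset.sum_mul]
  calc ∑ z : ZMod r, gC r n d R q v m *
        (tC r n d R q v m ^ z.val * tC r n d R q v (m + 1) ^ (-z).val)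
      = ∑ z : ZMod r, (tC r n d R q v (m + 1) ^ z.val * tC r n d R q v m ^ (-z).val) *
          gC r n d R q v m := by
        refine Finset.sum_congr rfl fun z _ => ?_
        rw [← mul_assoc, g_t_pow_self h1 h2, mul_assoc, g_t_pow_succ h1 h2, ← mul_assoc]
    _ = ∑ z : ZMod r, (tC r n d R q v m ^ z.val * tC r n d R q v (m + 1) ^ (-z).val) *
          gC r n d R q v m := by
        refine Fintype.sum_equiv (Equiv.neg (ZMod r)) _ _ fun z => ?_
        simp only [Equiv.neg_apply, neg_neg]
        congr 1
        exact ((commute_tt m (m + 1)).pow_pow _ _).symm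

lemma E_idem [NeZero r] (m : ℕ) :
    eijC r n d R q v m (m + 1) * eijC r n d R q v m (m + 1) =
      eijC r n d R q v m (m + 1) := by
  rw [E_z]
  set F : ZMod r → CYH r n d R q v :=
    fun z => tC r n d R q v m ^ z.val * tC r n d R q v (m + 1) ^ (-z).val with hF
  have hmul : ∀ z w : ZMod r, F z * F w = F (z + w) := by
    intro z w
    simp only [hF]
    rw [Commute.mul_mul_mul_comm ((commute_tt (m + 1) m).pow_pow _ _), ← tz_add, ← tz_add,
      ← neg_add]
  have hSS : (∑ z : ZMod r, F z) * (∑ z : ZMod r, F z) = (r : ℕ) • ∑ z : ZMod r, F z := by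
    rw [Finset.sum_mul]
    have : ∀ z : ZMod r, F z * (∑ w : ZMod r, F w) = ∑ w : ZMod r, F w := by
      intro z
      rw [Finset.mul_sum]
      refine Fintype.sum_equiv (Equiv.addLeft z) _ _ fun w => ?_
      rw [hmul]
      rfl
    rw [Finset.sum_congr rfl fun z _ => this z, Finset.sum_const, Finset.card_univ,
      ZMod.card]
  rw [smul_mul_smul, hSS, ← Nat.cast_smul_eq_nsmul R, smul_smul]
  congr 1
  rw [mul_assoc, invOf_mul_self, mul_one]

end Aux3
end YH
namespace YH
section Aux4

variable {r n d : ℕ} {R : Type} [CommRing R] [Invertible (r : R)] {q : Rˣ} {v : ℕ → Rˣ}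

lemma gX_adj {m : ℕ} (h1 : 1 ≤ m) (h2 : m ≤ n - 1) :
    gC r n d R q v m * XC r n d R q v (m + 1) =
      XC r n d R q v m * gC r n d R q v m +
        qd R q • (eijC r n d R q v m (m + 1) * XC r n d R q v (m + 1)) := by
  have hX : XC r n d R q v (m + 1) = gC r n d R q v m * XC r n d R q v m * gC r n d R q v m :=
    XC_succ' h1
  calc gC r n d R q v m * XC r n d R q v (m + 1)
      = (gC r n d R q v m * gC r n d R q v m) * XC r n d R q v m * gC r n d R q v m := by
        rw [hX]; simp only [mul_assoc]
    _ = (1 + qd R q • (eijC r n d R q v m (m + 1) * gC r n d R q v m)) * XC r n d R q v m *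
          gC r n d R q v m := by rw [← sq, g_sq h1 h2]
    _ = XC r n d R q v m * gC r n d R q v m +
          qd R q • (eijC r n d R q v m (m + 1) * XC r n d R q v (m + 1)) := by
        rw [hX, add_mul, add_mul, one_mul, smul_mul_assoc, smul_mul_assoc]
        congr 2
        simp only [mul_assoc]

lemma K1 {m : ℕ} (h1 : 1 ≤ m) (h2 : m ≤ n - 1) (j : ℕ) :
    gC r n d R q v m * XC r n d R q v (m + 1) ^ j =
      XC r n d R q v m ^ j * gC r n d R q v m +
        qd R q • ∑ i ∈ Finset.range j,
          XC r n d R q v m ^ i * eijC r n d R q v m (m + 1) *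
            XC r n d R q v (m + 1) ^ (j - i) := by
  induction j with
  | zero => simp
  | succ j ih =>
      have hsum : ∀ i ∈ Finset.range j,
          XC r n d R q v m ^ i * eijC r n d R q v m (m + 1) *
              XC r n d R q v (m + 1) ^ (j - i) * XC r n d R q v (m + 1) =
            XC r n d R q v m ^ i * eijC r n d R q v m (m + 1) *
              XC r n d R q v (m + 1) ^ (j + 1 - i) := by
        intro i hi
        have hji : j - i + 1 = j + 1 - i := by
          have := Finset.mem_range.mp hi; omega
        rw [mul_assoc, ← pow_succ, hji]
      rw [pow_succ, ← mul_assoc, ih, add_mul, smul_mul_assoc, Finset.sum_mul,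
        mul_assoc (XC r n d R q v m ^ j), gX_adj h1 h2, mul_add, ← mul_assoc, ← pow_succ,
        mul_smul_comm, Finset.sum_congr rfl hsum, Finset.sum_range_succ, smul_add]
      have h2' : j + 1 - j = 1 := by omega
      rw [h2', pow_one, ← mul_assoc]
      module

lemma K2 {m : ℕ} (h1 : 1 ≤ m) (h2 : m ≤ n - 1) (a : ℕ) :
    XC r n d R q v (m + 1) ^ (a + 1) =
      gC r n d R q v m * XC r n d R q v m ^ (a + 1) * gC r n d R q v m +
        qd R q • ∑ i ∈ Finset.range a,
          gC r n d R q v m * (XC r n d R q v m ^ (i + 1) * eijC r n d R q v m (m + 1) *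
            XC r n d R q v (m + 1) ^ (a - i)) := by
  have hX : XC r n d R q v (m + 1) = gC r n d R q v m * XC r n d R q v m * gC r n d R q v m :=
    XC_succ' h1
  have hterm : ∀ i ∈ Finset.range a,
      XC r n d R q v m * (XC r n d R q v m ^ i * eijC r n d R q v m (m + 1) *
        XC r n d R q v (m + 1) ^ (a - i)) =
      XC r n d R q v m ^ (i + 1) * eijC r n d R q v m (m + 1) *
        XC r n d R q v (m + 1) ^ (a - i) := by
    intro i _
    rw [← mul_assoc, ← mul_assoc, ← pow_succ']
  calc XC r n d R q v (m + 1) ^ (a + 1)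
      = gC r n d R q v m * XC r n d R q v m * (gC r n d R q v m *
          XC r n d R q v (m + 1) ^ a) := by
        rw [pow_succ', hX]; simp only [mul_assoc]
    _ = gC r n d R q v m * XC r n d R q v m * (XC r n d R q v m ^ a * gC r n d R q v m) +
          qd R q • ∑ i ∈ Finset.range a, gC r n d R q v m * (XC r n d R q v m *
            (XC r n d R q v m ^ i * eijC r n d R q v m (m + 1) *
              XC r n d R q v (m + 1) ^ (a - i))) := by
        rw [K1 h1 h2, mul_add, mul_smul_comm, Finset.mul_sum]
        congr 2
        refine Finset.sum_congr rfl fun i _ => ?_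
        simp only [mul_assoc]
    _ = gC r n d R q v m * XC r n d R q v m ^ (a + 1) * gC r n d R q v m +
          qd R q • ∑ i ∈ Finset.range a,
            gC r n d R q v m * (XC r n d R q v m ^ (i + 1) * eijC r n d R q v m (m + 1) *
              XC r n d R q v (m + 1) ^ (a - i)) := by
        rw [Finset.sum_congr rfl fun i hi => by rw [hterm i hi]]
        congr 1
        rw [← mul_assoc, mul_assoc (gC r n d R q v m), ← pow_succ']

end Aux4
end YH
namespace YH

variable (r n d : ℕ) (R : Type) [CommRing R] [Invertible (r : R)] (q : Rˣ) (v : ℕ → Rˣ)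

/-- `Y_{r,m}` for `m ≥ 1`, and the scalars for `m = 0`. -/
def Ws (m : ℕ) : Subalgebra R (CYH r n d R q v) :=
  if m = 0 then ⊥ else YsubC r n d R q v m

/-- The set `Y_{m-1} g_{m-1} Y_{m-1}` (empty unless `m ≥ 2`). -/
def SetA (m : ℕ) : Set (CYH r n d R q v) :=
  {x | 2 ≤ m ∧ ∃ u ∈ Ws r n d R q v (m - 1), ∃ w ∈ Ws r n d R q v (m - 1),
    x = u * gC r n d R q v (m - 1) * w}

/-- The set of `X_m^k t_m^s y`. -/
def SetB (m : ℕ) : Set (CYH r n d R q v) :=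
  {x | ∃ k, 1 ≤ k ∧ k ≤ d - 1 ∧ ∃ s, s ≤ r - 1 ∧ ∃ y ∈ Ws r n d R q v (m - 1),
    x = XC r n d R q v m ^ k * tC r n d R q v m ^ s * y}

def Sp (m : ℕ) : Submodule R (CYH r n d R q v) :=
  Submodule.span R (SetA r n d R q v m ∪ SetB r n d R q v m)

variable {r n d R q v}

lemma mem_Ws_t {m i : ℕ} (h1 : 1 ≤ i) (h2 : i ≤ m) : tC r n d R q v i ∈ Ws r n d R q v m := by
  rw [Ws, if_neg (by omega)]
  exact Algebra.subset_adjoin (Or.inl (Or.inl ⟨i, h1, h2, rfl⟩))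

lemma mem_Ws_g {m i : ℕ} (h1 : 1 ≤ i) (h2 : i ≤ m - 1) : gC r n d R q v i ∈ Ws r n d R q v m := by
  rw [Ws, if_neg (by omega)]
  exact Algebra.subset_adjoin (Or.inl (Or.inr ⟨i, h1, h2, rfl⟩))

lemma mem_Ws_X1 {m : ℕ} (hm : 1 ≤ m) : XC r n d R q v 1 ∈ Ws r n d R q v m := by
  rw [Ws, if_neg (by omega)]
  exact Algebra.subset_adjoin (Or.inr (Set.mem_insert _ _))

lemma mem_Ws_X {m : ℕ} (hm : 1 ≤ m) : ∀ k, k ≤ m → XC r n d R q v k ∈ Ws r n d R q v m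
  | 0, _ => by rw [XC_zero']; exact one_mem _
  | 1, _ => mem_Ws_X1 hm
  | (k + 2), hk => by
      rw [XC_succ]
      exact mul_mem (mul_mem (mem_Ws_g (by omega) (by omega))
        (mem_Ws_X hm (k + 1) (by omega))) (mem_Ws_g (by omega) (by omega))

lemma Ws_mono {m m' : ℕ} (h : m ≤ m') : Ws r n d R q v m ≤ Ws r n d R q v m' := by
  rcases Nat.eq_zero_or_pos m with hm | hm
  · subst hm; rw [Ws, if_pos rfl]; exact bot_le
  · rw [Ws, if_neg (by omega), Ws, if_neg (by omega)]
    apply Algebra.adjoin_mono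
    intro x hx
    rcases hx with (ht | hg) | hX
    · obtain ⟨i, hi1, hi2, rfl⟩ := ht
      exact Or.inl (Or.inl ⟨i, hi1, by omega, rfl⟩)
    · obtain ⟨i, hi1, hi2, rfl⟩ := hg
      exact Or.inl (Or.inr ⟨i, hi1, by omega, rfl⟩)
    · exact Or.inr hX

lemma comm_Ws {m : ℕ} {c : CYH r n d R q v}
    (ht : ∀ i, 1 ≤ i → i ≤ m → c * tC r n d R q v i = tC r n d R q v i * c)
    (hg : ∀ i, 1 ≤ i → i ≤ m - 1 → c * gC r n d R q v i = gC r n d R q v i * c)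
    (hX : 1 ≤ m → c * XC r n d R q v 1 = XC r n d R q v 1 * c)
    (hXi : 1 ≤ m → c * XCinv r n d R q v 1 = XCinv r n d R q v 1 * c) :
    ∀ y ∈ Ws r n d R q v m, c * y = y * c := by
  intro y hy
  rcases Nat.eq_zero_or_pos m with hm | hm
  · subst hm
    rw [Ws, if_pos rfl] at hy
    obtain ⟨c', rfl⟩ := Algebra.mem_bot.mp hy
    exact (Algebra.commutes c' c).symm
  · rw [Ws, if_neg (by omega)] at hy
    have hle : YsubC r n d R q v m ≤ Subalgebra.centralizer R {c} := by
      apply Algebra.adjoin_le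
      intro x hx
      refine (Subalgebra.mem_centralizer_iff R).mpr ?_
      intro g hgmem
      rw [Set.mem_singleton_iff] at hgmem
      subst hgmem
      rcases hx with (ht' | hg') | hX'
      · obtain ⟨i, hi1, hi2, rfl⟩ := ht'
        exact ht i hi1 hi2
      · obtain ⟨i, hi1, hi2, rfl⟩ := hg'
        exact hg i hi1 hi2
      · rcases hX' with h | h
        · rw [h]; exact hX hm
        · rw [Set.mem_singleton_iff] at h; rw [h]; exact hXi hm
    have := hle hy
    rw [Subalgebra.mem_centralizer_iff] at this
    exact this c rfl

lemma comm_g_Ws {m : ℕ} (h1 : 1 ≤ m) (h2 : m ≤ n - 1) :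
    ∀ y ∈ Ws r n d R q v (m - 1), gC r n d R q v m * y = y * gC r n d R q v m := by
  refine comm_Ws ?_ ?_ ?_ ?_
  · intro i hi1 hi2
    exact g_t_comm h1 h2 (by omega) (by omega)
  · intro i hi1 hi2
    exact (g_g_comm hi1 (by omega)).symm
  · intro hm1
    exact g_X1 (by omega)
  · intro hm1
    exact g_Xinv1 (by omega)

lemma comm_t_Ws {m : ℕ} (hm : m ≤ n - 1) :
    ∀ y ∈ Ws r n d R q v m, tC r n d R q v (m + 1) * y = y * tC r n d R q v (m + 1) := by
  refine comm_Ws ?_ ?_ ?_ ?_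
  · intro i _ _
    exact t_comm (m + 1) i
  · intro i hi1 hi2
    exact (g_t_comm hi1 (by omega) (by omega) (by omega)).symm
  · intro _
    exact t_X1 (m + 1)
  · intro _
    exact t_Xinv1 (m + 1)

lemma comm_tpow_Ws {m : ℕ} (hm : m ≤ n - 1) {y : CYH r n d R q v}
    (hy : y ∈ Ws r n d R q v m) (c : ℕ) :
    tC r n d R q v (m + 1) ^ c * y = y * tC r n d R q v (m + 1) ^ c := by
  have h : Commute (tC r n d R q v (m + 1)) y := comm_t_Ws hm y hy
  exact (h.pow_left c).eq

lemma memA {m : ℕ} (hm : 1 ≤ m) {u w : CYH r n d R q v}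
    (hu : u ∈ Ws r n d R q v m) (hw : w ∈ Ws r n d R q v m) :
    u * gC r n d R q v m * w ∈ Sp r n d R q v (m + 1) := by
  refine Submodule.subset_span (Or.inl ⟨by omega, u, ?_, w, ?_, ?_⟩)
  · simpa using hu
  · simpa using hw
  · simp

lemma memB {m : ℕ} (hr : 1 ≤ r) {k : ℕ} (c : ℕ) (hk1 : 1 ≤ k) (hk2 : k ≤ d - 1)
    {y : CYH r n d R q v} (hy : y ∈ Ws r n d R q v m) :
    XC r n d R q v (m + 1) ^ k * tC r n d R q v (m + 1) ^ c * y ∈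
      Sp r n d R q v (m + 1) := by
  rw [t_pow_mod]
  have hcr : c % r ≤ r - 1 := by
    have := Nat.mod_lt c (show 0 < r by omega)
    omega
  refine Submodule.subset_span (Or.inr ⟨k, hk1, hk2, c % r, hcr, y, ?_, rfl⟩)
  simpa using hy

lemma St1 {m : ℕ} {z y : CYH r n d R q v} (hz : z ∈ Sp r n d R q v (m + 1))
    (hy : y ∈ Ws r n d R q v m) : z * y ∈ Sp r n d R q v (m + 1) := by
  induction hz using Submodule.span_induction with
  | mem x hx =>
      rcases hx with hA | hB
      · obtain ⟨h2m, u, hu, w, hw, rfl⟩ := hA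
        rw [mul_assoc]
        refine Submodule.subset_span (Or.inl ⟨h2m, u, hu, w * y, ?_, ?_⟩)
        · exact mul_mem hw (by simpa using hy)
        · rw [mul_assoc]
      · obtain ⟨k, hk1, hk2, s, hs, y', hy', rfl⟩ := hB
        rw [mul_assoc]
        refine Submodule.subset_span (Or.inr ⟨k, hk1, hk2, s, hs, y' * y, ?_, ?_⟩)
        · exact mul_mem hy' (by simpa using hy)
        · rw [mul_assoc]
  | zero => rw [zero_mul]; exact zero_mem _
  | add a b _ _ ha hb => rw [add_mul]; exact add_mem ha hb
  | smul a x _ hx => rw [smul_mul_assoc]; exact Submodule.smul_mem _ _ hx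

lemma St2 (hr : 1 ≤ r) {m : ℕ} (h1 : 1 ≤ m) (h2 : m ≤ n - 1) {z : CYH r n d R q v}
    (c : ℕ) (hz : z ∈ Sp r n d R q v (m + 1)) :
    z * tC r n d R q v (m + 1) ^ c ∈ Sp r n d R q v (m + 1) := by
  induction hz using Submodule.span_induction with
  | mem x hx =>
      rcases hx with hA | hB
      · obtain ⟨h2m, u, hu, w, hw, rfl⟩ := hA
        have hw' : w ∈ Ws r n d R q v m := by simpa using hw
        have hu' : u ∈ Ws r n d R q v m := by simpa using hu
        have step : u * gC r n d R q v (m + 1 - 1) * w * tC r n d R q v (m + 1) ^ c =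
            (u * tC r n d R q v m ^ c) * gC r n d R q v m * w := by
          have hgm : (m + 1 - 1) = m := by omega
          rw [hgm, mul_assoc, ← comm_tpow_Ws h2 hw' c, ← mul_assoc, mul_assoc u,
            g_t_pow_succ h1 h2, ← mul_assoc]
        rw [step]
        exact memA h1 (mul_mem hu' (pow_mem (mem_Ws_t h1 le_rfl) c)) hw'
      · obtain ⟨k, hk1, hk2, s, hs, y', hy', rfl⟩ := hB
        have hy'' : y' ∈ Ws r n d R q v m := by simpa using hy'
        have step : XC r n d R q v (m + 1) ^ k * tC r n d R q v (m + 1) ^ s * y' *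
            tC r n d R q v (m + 1) ^ c =
            XC r n d R q v (m + 1) ^ k * tC r n d R q v (m + 1) ^ (s + c) * y' := by
          rw [mul_assoc, ← comm_tpow_Ws h2 hy'' c, ← mul_assoc, mul_assoc
            (XC r n d R q v (m + 1) ^ k), ← pow_add]
        rw [step]
        exact memB hr (s + c) hk1 hk2 hy''
  | zero => rw [zero_mul]; exact zero_mem _
  | add a b _ _ ha hb => rw [add_mul]; exact add_mem ha hb
  | smul a x _ hx => rw [smul_mul_assoc]; exact Submodule.smul_mem _ _ hx

end YH
namespace YH
section Aux6

variable {r n d : ℕ} {R : Type} [CommRing R] [Invertible (r : R)] {q : Rˣ} {v : ℕ → Rˣ}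

lemma commute_XX (m : ℕ) : Commute (XC r n d R q v m) (XC r n d R q v (m + 1)) :=
  X_adj_comm m

lemma memGE [NeZero r] (hr : 1 ≤ r) {m : ℕ} (h1 : 1 ≤ m) (h2 : m ≤ n - 1)
    {y1 y2 : CYH r n d R q v} (hy1 : y1 ∈ Ws r n d R q v m) (hy2 : y2 ∈ Ws r n d R q v m) :
    y1 * gC r n d R q v m * y2 * eijC r n d R q v m (m + 1) ∈ Sp r n d R q v (m + 1) := by
  rw [E_z, mul_smul_comm, Finset.mul_sum]
  refine Submodule.smul_mem _ _ (Submodule.sum_mem _ fun z _ => ?_)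
  have hy2' : y2 * tC r n d R q v m ^ z.val ∈ Ws r n d R q v m :=
    mul_mem hy2 (pow_mem (mem_Ws_t h1 le_rfl) z.val)
  have step : y1 * gC r n d R q v m * y2 * (tC r n d R q v m ^ z.val *
      tC r n d R q v (m + 1) ^ (-z).val) =
      (y1 * tC r n d R q v m ^ (-z).val) * gC r n d R q v m *
        (y2 * tC r n d R q v m ^ z.val) := by
    rw [← mul_assoc, mul_assoc (y1 * gC r n d R q v m), mul_assoc (y1 * gC r n d R q v m),
      ← comm_tpow_Ws h2 hy2' (-z).val, ← mul_assoc, mul_assoc y1,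
      g_t_pow_succ h1 h2, ← mul_assoc]
    simp only [mul_assoc]
  rw [step]
  exact memA h1 (mul_mem hy1 (pow_mem (mem_Ws_t h1 le_rfl) _)) hy2'

lemma memXE [NeZero r] (hr : 1 ≤ r) {m k : ℕ} (h1 : 1 ≤ m) (h2 : m ≤ n - 1)
    (hk1 : 1 ≤ k) (hk2 : k ≤ d - 1) {y : CYH r n d R q v} (hy : y ∈ Ws r n d R q v m) :
    XC r n d R q v (m + 1) ^ k * y * eijC r n d R q v m (m + 1) ∈
      Sp r n d R q v (m + 1) := by
  rw [E_z, mul_smul_comm, Finset.mul_sum]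
  refine Submodule.smul_mem _ _ (Submodule.sum_mem _ fun z _ => ?_)
  have hy' : y * tC r n d R q v m ^ z.val ∈ Ws r n d R q v m :=
    mul_mem hy (pow_mem (mem_Ws_t h1 le_rfl) z.val)
  have step : XC r n d R q v (m + 1) ^ k * y * (tC r n d R q v m ^ z.val *
      tC r n d R q v (m + 1) ^ (-z).val) =
      XC r n d R q v (m + 1) ^ k * tC r n d R q v (m + 1) ^ (-z).val *
        (y * tC r n d R q v m ^ z.val) := by
    rw [← mul_assoc, mul_assoc (XC r n d R q v (m + 1) ^ k),
      mul_assoc (XC r n d R q v (m + 1) ^ k), ← comm_tpow_Ws h2 hy' (-z).val,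
      ← mul_assoc]
  rw [step, mul_assoc]
  rw [← mul_assoc]
  exact memB hr _ hk1 hk2 hy'

lemma EG_mem [NeZero r] {m : ℕ} (h1 : 1 ≤ m) (h2 : m ≤ n - 1) :
    eijC r n d R q v m (m + 1) * gC r n d R q v m ∈ Sp r n d R q v (m + 1) := by
  rw [E_z, smul_mul_assoc, Finset.sum_mul]
  refine Submodule.smul_mem _ _ (Submodule.sum_mem _ fun z _ => ?_)
  have step : tC r n d R q v m ^ z.val * tC r n d R q v (m + 1) ^ (-z).val *
      gC r n d R q v m =
      tC r n d R q v m ^ z.val * gC r n d R q v m * tC r n d R q v m ^ (-z).val := by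
    rw [mul_assoc, (g_t_pow_self h1 h2 ((-z).val)).symm, ← mul_assoc]
  rw [step]
  exact memA h1 (pow_mem (mem_Ws_t h1 le_rfl) _) (pow_mem (mem_Ws_t h1 le_rfl) _)

lemma K3_helper [NeZero r] {m : ℕ} (a c b : ℕ) :
    XC r n d R q v m ^ a * eijC r n d R q v m (m + 1) * XC r n d R q v (m + 1) ^ c *
      (XC r n d R q v m ^ b * eijC r n d R q v m (m + 1)) =
      XC r n d R q v (m + 1) ^ c * (XC r n d R q v m ^ (a + b)) *
        eijC r n d R q v m (m + 1) := by
  have cEXm : Commute (eijC r n d R q v m (m + 1)) (XC r n d R q v m ^ b) :=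
    (commute_X_E m m (m + 1)).symm.pow_right b
  have cEX1 : Commute (eijC r n d R q v m (m + 1)) (XC r n d R q v (m + 1) ^ c) :=
    (commute_X_E (m + 1) m (m + 1)).symm.pow_right c
  have cX1Xm : ∀ x y : ℕ, Commute (XC r n d R q v (m + 1) ^ x) (XC r n d R q v m ^ y) :=
    fun x y => (commute_XX m).symm.pow_pow x y
  simp only [mul_assoc]
  rw [lcomm cEX1.eq, lcomm cEXm.eq, E_idem, lcomm (cX1Xm c b).eq, ← mul_assoc,
    ← pow_add, lcomm ((cX1Xm c (a + b)).symm.eq)]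

lemma K3 [NeZero r] (hr : 1 ≤ r) {m b i : ℕ} (h1 : 1 ≤ m) (h2 : m ≤ n - 1)
    (hi1 : 1 ≤ i) (hi2 : i ≤ d - 1) :
    gC r n d R q v m * XC r n d R q v m ^ b * eijC r n d R q v m (m + 1) *
      XC r n d R q v (m + 1) ^ i ∈ Sp r n d R q v (m + 1) := by
  have cEX1 : Commute (eijC r n d R q v m (m + 1)) (XC r n d R q v (m + 1) ^ i) :=
    (commute_X_E (m + 1) m (m + 1)).symm.pow_right i
  have cXmX1 : Commute (XC r n d R q v m ^ b) (XC r n d R q v (m + 1) ^ i) :=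
    (commute_XX m).pow_pow b i
  rw [mul_assoc, cEX1.eq, ← mul_assoc, mul_assoc (gC r n d R q v m), cXmX1.eq,
    ← mul_assoc, K1 h1 h2 i, add_mul, add_mul, smul_mul_assoc, smul_mul_assoc,
    Finset.sum_mul, Finset.sum_mul]
  refine add_mem ?_ (Submodule.smul_mem _ _ (Submodule.sum_mem _ fun i' hi' => ?_))
  · exact memGE hr h1 h2 (pow_mem (mem_Ws_X h1 m le_rfl) i) (pow_mem (mem_Ws_X h1 m le_rfl) b)
  · have hii := Finset.mem_range.mp hi'
    rw [mul_assoc, K3_helper]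
    exact memXE hr h1 h2 (by omega) (by omega) (pow_mem (mem_Ws_X h1 m le_rfl) _)

end Aux6
end YH
namespace YH
section Aux7

variable {r n d : ℕ} {R : Type} [CommRing R] [Invertible (r : R)] {q : Rˣ} {v : ℕ → Rˣ}

lemma GzG [NeZero r] (hr : 1 ≤ r) {m : ℕ} (h1 : 1 ≤ m) (h2 : m ≤ n - 1)
    {z : CYH r n d R q v} (hz : z ∈ Sp r n d R q v m) :
    gC r n d R q v m * z * gC r n d R q v m ∈ Sp r n d R q v (m + 1) := by
  induction hz using Submodule.span_induction with
  | zero => rw [mul_zero, zero_mul]; exact zero_mem _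
  | add a b _ _ ha hb => rw [mul_add, add_mul]; exact add_mem ha hb
  | smul a x _ hx => rw [mul_smul_comm, smul_mul_assoc]; exact Submodule.smul_mem _ _ hx
  | mem x hx =>
      have c1 := comm_g_Ws (r := r) (n := n) (d := d) (R := R) (q := q) (v := v) h1 h2
      rcases hx with hA | hB
      · obtain ⟨h2m, u, hu, w, hw, rfl⟩ := hA
        obtain ⟨p, rfl⟩ : ∃ p, m = p + 2 := ⟨m - 2, by omega⟩
        have hbr : gC r n d R q v (p + 1) * gC r n d R q v (p + 2) * gC r n d R q v (p + 1) =
            gC r n d R q v (p + 2) * gC r n d R q v (p + 1) * gC r n d R q v (p + 2) :=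
          g_braid (by omega) (by omega)
        have hbrt : ∀ z', gC r n d R q v (p + 2) * (gC r n d R q v (p + 1) *
            (gC r n d R q v (p + 2) * z')) = gC r n d R q v (p + 1) *
            (gC r n d R q v (p + 2) * (gC r n d R q v (p + 1) * z')) := by
          intro z'
          rw [← mul_assoc, ← mul_assoc, ← hbr, mul_assoc, mul_assoc]
        have step : gC r n d R q v (p + 2) * (u * gC r n d R q v (p + 2 - 1) * w) *
            gC r n d R q v (p + 2) =
            (u * gC r n d R q v (p + 1)) * gC r n d R q v (p + 2) *
              (gC r n d R q v (p + 1) * w) := by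
          simp only [show p + 2 - 1 = p + 1 from rfl, mul_assoc]
          rw [← c1 w hw, lcomm (c1 u hu), hbrt]
        rw [step]
        refine memA (by omega) ?_ ?_
        · exact mul_mem (Ws_mono (by omega) hu) (mem_Ws_g (by omega) (by omega))
        · exact mul_mem (mem_Ws_g (by omega) (by omega)) (Ws_mono (by omega) hw)
      · obtain ⟨k, hk1, hk2, s, hs, y, hy, rfl⟩ := hB
        obtain ⟨k', rfl⟩ : ∃ k', k = k' + 1 := ⟨k - 1, by omega⟩
        have step : gC r n d R q v m * (XC r n d R q v m ^ (k' + 1) *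
            tC r n d R q v m ^ s * y) * gC r n d R q v m =
            (gC r n d R q v m * XC r n d R q v m ^ (k' + 1) * gC r n d R q v m) *
              (tC r n d R q v (m + 1) ^ s * y) := by
          have hswap : ∀ z' : CYH r n d R q v, tC r n d R q v m ^ s *
              (gC r n d R q v m * z') = gC r n d R q v m *
              (tC r n d R q v (m + 1) ^ s * z') := lswap ((g_t_pow_succ h1 h2 s).symm)
          simp only [mul_assoc]
          rw [← c1 y hy, hswap]
        rw [step]
        have hK2 : gC r n d R q v m * XC r n d R q v m ^ (k' + 1) * gC r n d R q v m =
            XC r n d R q v (m + 1) ^ (k' + 1) -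
              qd R q • ∑ i ∈ Finset.range k',
                gC r n d R q v m * (XC r n d R q v m ^ (i + 1) *
                  eijC r n d R q v m (m + 1) * XC r n d R q v (m + 1) ^ (k' - i)) :=
          eq_sub_of_add_eq (K2 h1 h2 k').symm
        rw [hK2, sub_mul]
        refine sub_mem ?_ ?_
        · rw [← mul_assoc]
          exact memB hr s hk1 hk2 (Ws_mono (by omega) hy)
        · rw [smul_mul_assoc, Finset.sum_mul]
          refine Submodule.smul_mem _ _ (Submodule.sum_mem _ fun i hi => ?_)
          have hii := Finset.mem_range.mp hi
          have e1 : gC r n d R q v m * (XC r n d R q v m ^ (i + 1) *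
              eijC r n d R q v m (m + 1) * XC r n d R q v (m + 1) ^ (k' - i)) *
              (tC r n d R q v (m + 1) ^ s * y) =
              gC r n d R q v m * XC r n d R q v m ^ (i + 1) *
                eijC r n d R q v m (m + 1) * XC r n d R q v (m + 1) ^ (k' - i) *
                tC r n d R q v (m + 1) ^ s * y := by
            simp only [mul_assoc]
          rw [e1]
          refine St1 (St2 hr h1 h2 s ?_) (Ws_mono (by omega) hy)
          exact K3 hr h1 h2 (by omega) (by omega)

lemma adC_succ (D : ℕ) : adC (D + 1) R v = adC D R v * (-(v D : R)) := by
  rw [adC, adC, List.range_succ, List.map_append, List.prod_append, List.map_singleton,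
    List.prod_singleton, pow_succ]
  ring

lemma mkC_f1 : mkC r n d R q v (f1F n d R v) = 0 := by
  have h : mkC r n d R q v (f1F n d R v) = mkC r n d R q v 0 :=
    RingQuot.mkAlgHom_rel R CRel.cyc
  rw [h, map_zero]

lemma mkC_f1_prod : mkC r n d R q v (f1F n d R v) =
    ((List.range d).map fun l =>
      XC r n d R q v 1 - algebraMap R (CYH r n d R q v) ((v l : R))).prod := by
  rw [f1F, map_list_prod, List.map_map]
  refine congrArg List.prod (List.map_congr_left fun l _ => ?_)
  simp only [Function.comp_apply, map_sub, AlgHom.commutes]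
  rfl

lemma spanX_mul {D : ℕ} {z : CYH r n d R q v}
    (hz : z ∈ Submodule.span R {x | ∃ k, 1 ≤ k ∧ k ≤ D - 1 ∧ x = XC r n d R q v 1 ^ k}) :
    z * XC r n d R q v 1 ∈
      Submodule.span R {x | ∃ k, 1 ≤ k ∧ k ≤ D ∧ x = XC r n d R q v 1 ^ k} := by
  induction hz using Submodule.span_induction with
  | mem x hx =>
      obtain ⟨k, hk1, hk2, rfl⟩ := hx
      refine Submodule.subset_span ⟨k + 1, by omega, by omega, ?_⟩
      rw [pow_succ]
  | zero => rw [zero_mul]; exact zero_mem _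
  | add a b _ _ ha hb => rw [add_mul]; exact add_mem ha hb
  | smul a x _ hx => rw [smul_mul_assoc]; exact Submodule.smul_mem _ _ hx

lemma spanX_mono {D D' : ℕ} (h : D ≤ D') :
    Submodule.span R {x | ∃ k, 1 ≤ k ∧ k ≤ D ∧ x = XC r n d R q v 1 ^ k} ≤
      Submodule.span R {x | ∃ k, 1 ≤ k ∧ k ≤ D' ∧ x = XC r n d R q v 1 ^ k} := by
  apply Submodule.span_mono
  rintro x ⟨k, hk1, hk2, rfl⟩
  exact ⟨k, hk1, by omega, rfl⟩

lemma prod_expand {D : ℕ} (hD : 1 ≤ D) :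
    ((List.range D).map fun l =>
        XC r n d R q v 1 - algebraMap R (CYH r n d R q v) ((v l : R))).prod -
      XC r n d R q v 1 ^ D - algebraMap R (CYH r n d R q v) (adC D R v) ∈
      Submodule.span R {x | ∃ k, 1 ≤ k ∧ k ≤ D - 1 ∧ x = XC r n d R q v 1 ^ k} := by
  induction D, hD using Nat.le_induction with
  | base =>
      have h1 : adC 1 R v = -((v 0 : R)) := by
        rw [adC, show List.range 1 = [0] from rfl, List.map_singleton, List.prod_singleton,
          pow_one]
        ring
      have h2 : ((List.range 1).map fun l =>
          XC r n d R q v 1 - algebraMap R (CYH r n d R q v) ((v l : R))).prod =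
          XC r n d R q v 1 - algebraMap R (CYH r n d R q v) ((v 0 : R)) := by
        rw [show List.range 1 = [0] from rfl, List.map_singleton, List.prod_singleton]
      rw [h1, h2, map_neg, pow_one]
      have : XC r n d R q v 1 - algebraMap R (CYH r n d R q v) ((v 0 : R)) -
          XC r n d R q v 1 - -algebraMap R (CYH r n d R q v) ((v 0 : R)) = 0 := by abel
      rw [this]
      exact zero_mem _
  | succ D hD ih =>
      have hsplit : ((List.range (D + 1)).map fun l =>
          XC r n d R q v 1 - algebraMap R (CYH r n d R q v) ((v l : R))).prod =
          ((List.range D).map fun l =>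
            XC r n d R q v 1 - algebraMap R (CYH r n d R q v) ((v l : R))).prod *
            (XC r n d R q v 1 - algebraMap R (CYH r n d R q v) ((v D : R))) := by
        rw [List.range_succ, List.map_append, List.prod_append]
        simp
      set P := ((List.range D).map fun l =>
        XC r n d R q v 1 - algebraMap R (CYH r n d R q v) ((v l : R))).prod with hP
      have key : P * (XC r n d R q v 1 - algebraMap R (CYH r n d R q v) ((v D : R))) -
          XC r n d R q v 1 ^ (D + 1) -
          algebraMap R (CYH r n d R q v) (adC (D + 1) R v) =
          (P - XC r n d R q v 1 ^ D - algebraMap R (CYH r n d R q v) (adC D R v)) *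
              XC r n d R q v 1 +
            ((adC D R v) • XC r n d R q v 1 ^ 1 - (v D : R) • XC r n d R q v 1 ^ D -
              (v D : R) • (P - XC r n d R q v 1 ^ D -
                algebraMap R (CYH r n d R q v) (adC D R v))) := by
        rw [adC_succ]
        simp only [map_mul, map_neg, Algebra.algebraMap_eq_smul_one, mul_sub, sub_mul,
          smul_mul_assoc, mul_smul_comm, one_mul, mul_one, smul_sub, smul_smul,
          pow_succ, pow_zero, mul_neg, smul_neg, neg_neg]
        module
      rw [hsplit, key]
      refine add_mem (spanX_mul ih) (sub_mem (sub_mem ?_ ?_) ?_)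
      · exact Submodule.smul_mem _ _ (Submodule.subset_span ⟨1, le_rfl, by omega, rfl⟩)
      · exact Submodule.smul_mem _ _ (Submodule.subset_span ⟨D, hD, by omega, rfl⟩)
      · exact Submodule.smul_mem _ _ (spanX_mono (by omega) ih)

lemma baseP [NeZero r] (hr : 1 ≤ r) (hd : 1 ≤ d) :
    XC r n d R q v 1 ^ d + algebraMap R (CYH r n d R q v) (adC d R v) ∈
      Sp r n d R q v 1 := by
  have h0 : ((List.range d).map fun l =>
      XC r n d R q v 1 - algebraMap R (CYH r n d R q v) ((v l : R))).prod = 0 := by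
    rw [← mkC_f1_prod, mkC_f1]
  have h1 := prod_expand (r := r) (n := n) (d := d) (R := R) (q := q) (v := v) hd
  rw [h0] at h1
  have h2 := neg_mem h1
  have h3 : -(0 - XC r n d R q v 1 ^ d - algebraMap R (CYH r n d R q v) (adC d R v)) =
      XC r n d R q v 1 ^ d + algebraMap R (CYH r n d R q v) (adC d R v) := by abel
  rw [h3] at h2
  have hle : Submodule.span R {x | ∃ k, 1 ≤ k ∧ k ≤ d - 1 ∧ x = XC r n d R q v 1 ^ k} ≤
      Sp r n d R q v 1 := by
    apply Submodule.span_le.mpr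
    rintro x ⟨k, hk1, hk2, rfl⟩
    refine Submodule.subset_span (Or.inr ⟨k, hk1, hk2, 0, by omega, 1, one_mem _, ?_⟩)
    rw [pow_zero, mul_one, mul_one]
  exact hle h2

lemma mainP [NeZero r] (hr : 1 ≤ r) (hd : 1 ≤ d) :
    ∀ m, 1 ≤ m → m ≤ n →
      XC r n d R q v m ^ d + algebraMap R (CYH r n d R q v) (adC d R v) ∈
        Sp r n d R q v m := by
  intro m hm1
  induction m, hm1 using Nat.le_induction with
  | base => intro _; exact baseP hr hd
  | succ m hm1 ih =>
      intro hmn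
      have h2 : m ≤ n - 1 := by omega
      have ihm := ih (by omega)
      -- decompose X_{m+1}^d + κ
      have hdd : d - 1 + 1 = d := by omega
      have hK2 := K2 (r := r) (n := n) (d := d) (R := R) (q := q) (v := v) hm1 h2 (d - 1)
      rw [hdd] at hK2
      have hGkG : gC r n d R q v m * algebraMap R (CYH r n d R q v) (adC d R v) *
          gC r n d R q v m = (adC d R v) • (gC r n d R q v m * gC r n d R q v m) := by
        rw [← Algebra.commutes, Algebra.smul_def, mul_assoc]
      have e3 : algebraMap R (CYH r n d R q v) (adC d R v) -
          (adC d R v) • (gC r n d R q v m * gC r n d R q v m) =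
          -((adC d R v * qd R q) • (eijC r n d R q v m (m + 1) * gC r n d R q v m)) := by
        rw [← sq, g_sq hm1 h2, smul_add, smul_smul]
        rw [Algebra.algebraMap_eq_smul_one]
        abel
      have main_eq : XC r n d R q v (m + 1) ^ d +
          algebraMap R (CYH r n d R q v) (adC d R v) =
          gC r n d R q v m * (XC r n d R q v m ^ d +
              algebraMap R (CYH r n d R q v) (adC d R v)) * gC r n d R q v m +
            qd R q • (∑ i ∈ Finset.range (d - 1),
              gC r n d R q v m * (XC r n d R q v m ^ (i + 1) *
                eijC r n d R q v m (m + 1) * XC r n d R q v (m + 1) ^ (d - 1 - i))) +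
            (algebraMap R (CYH r n d R q v) (adC d R v) -
              (adC d R v) • (gC r n d R q v m * gC r n d R q v m)) := by
        rw [mul_add (gC r n d R q v m), add_mul, hGkG, hK2]
        abel
      rw [main_eq]
      refine add_mem (add_mem ?_ ?_) ?_
      · exact GzG hr hm1 h2 ihm
      · refine Submodule.smul_mem _ _ (Submodule.sum_mem _ fun i hi => ?_)
        have hii := Finset.mem_range.mp hi
        have e1 : gC r n d R q v m * (XC r n d R q v m ^ (i + 1) *
            eijC r n d R q v m (m + 1) * XC r n d R q v (m + 1) ^ (d - 1 - i)) =
            gC r n d R q v m * XC r n d R q v m ^ (i + 1) *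
              eijC r n d R q v m (m + 1) * XC r n d R q v (m + 1) ^ (d - 1 - i) := by
          simp only [mul_assoc]
        rw [e1]
        exact K3 hr hm1 h2 (by omega) (by omega)
      · rw [e3]
        exact neg_mem (Submodule.smul_mem _ _ (EG_mem hm1 h2))

end Aux7
end YH
namespace YH

/-- In `Y_{r,n+1}^d` the element `X_{n+1}^d + a_d` lies in
`Y_{r,n}^d g_n Y_{r,n}^d + Σ_{k=1}^{d-1} Σ_{s=0}^{r-1} X_{n+1}^k t_{n+1}^s Y_{r,n}^d`,
where `a_d = (-1)^d v_1 ⋯ v_d`. -/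
theorem Xpow_d_add_ad_mem
    (r n d : ℕ) (hr : 1 ≤ r) (hn : 1 ≤ n) (hd : 1 ≤ d)
    (R : Type) [CommRing R] [Invertible (r : R)] (q : Rˣ) (v : ℕ → Rˣ) :
    XC r (n + 1) d R q v (n + 1) ^ d + algebraMap R (CYH r (n + 1) d R q v) (adC d R v) ∈
      Submodule.span R
        ({x | ∃ u ∈ YsubC r (n + 1) d R q v n, ∃ w ∈ YsubC r (n + 1) d R q v n,
            x = u * gC r (n + 1) d R q v n * w} ∪
         {x | ∃ k, 1 ≤ k ∧ k ≤ d - 1 ∧ ∃ s, s ≤ r - 1 ∧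
            ∃ y ∈ YsubC r (n + 1) d R q v n,
              x = XC r (n + 1) d R q v (n + 1) ^ k *
                tC r (n + 1) d R q v (n + 1) ^ s * y}) := by
  haveI : NeZero r := ⟨by omega⟩
  have hP := mainP (r := r) (n := n + 1) (d := d) (R := R) (q := q) (v := v) hr hd
    (n + 1) (by omega) le_rfl
  have hWs : ∀ u : CYH r (n + 1) d R q v, u ∈ Ws r (n + 1) d R q v (n + 1 - 1) →
      u ∈ YsubC r (n + 1) d R q v n := by
    intro u hu
    rw [Ws, if_neg (by omega)] at hu
    exact hu
  have hle : Sp r (n + 1) d R q v (n + 1) ≤ Submodule.span R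
      ({x | ∃ u ∈ YsubC r (n + 1) d R q v n, ∃ w ∈ YsubC r (n + 1) d R q v n,
          x = u * gC r (n + 1) d R q v n * w} ∪
       {x | ∃ k, 1 ≤ k ∧ k ≤ d - 1 ∧ ∃ s, s ≤ r - 1 ∧
          ∃ y ∈ YsubC r (n + 1) d R q v n,
            x = XC r (n + 1) d R q v (n + 1) ^ k *
              tC r (n + 1) d R q v (n + 1) ^ s * y}) := by
    apply Submodule.span_le.mpr
    rintro x (hA | hB)
    · obtain ⟨h2m, u, hu, w, hw, rfl⟩ := hA
      exact Submodule.subset_span (Or.inl ⟨u, hWs u hu, w, hWs w hw, rfl⟩)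
    · obtain ⟨k, hk1, hk2, s, hs, y, hy, rfl⟩ := hB
      exact Submodule.subset_span (Or.inr ⟨k, hk1, hk2, s, hs, y, hWs y hy, rfl⟩)
  exact hle hP

end YH
end
end
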